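/- arXiv:1907.10962 — 5 statements merged into one kernel-verified Lean document; each statement's English description precedes it below -/
import Mathlib

section
/- Let k ≥ 1 be an integer and let G be a finite simple graph with 2k−2 < mad(G) ≤ 2k. Then col(G²) ≤ (2k−1)·Δ(G) + 2k + 1, where Δ(G) is the maximum degree of G. -/
/-- The `p`-th power of a graph: vertices are adjacent iff distinct and at distance at most `p`. -/
def graphPow {V : Type*} (G : SimpleGraph V) (p : ℕ) : SimpleGraph V where
  Adj x y := x ≠ y ∧ G.Reachable x y ∧ G.dist x y ≤ p
  symm := by
    constructor
    rintro x y ⟨hxy, hr, hd⟩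
    exact ⟨hxy.symm, hr.symm, by rwa [SimpleGraph.dist_comm]⟩
  loopless := by constructor; rintro x ⟨h, -⟩; exact h rfl

/-- Maximum average degree: max over nonempty subgraphs of 2|E(H)|/|V(H)|. -/
noncomputable def mad {V : Type*} (G : SimpleGraph V) : ℝ :=
  sSup { x : ℝ | ∃ H : G.Subgraph, H.verts.Nonempty ∧
    x = 2 * H.edgeSet.ncard / H.verts.ncard }

/-- Coloring number: min over linear orders (injections into ℕ) of max back-closed-neighborhood size. -/
noncomputable def col {V : Type*} [Fintype V] (G : SimpleGraph V) : ℕ :=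
  sInf { n : ℕ | ∃ σ : V ↪ ℕ,
    ∀ x : V, ({ y : V | σ y ≤ σ x ∧ (y = x ∨ G.Adj x y) }).ncard ≤ n }

/-- Weak `k`-coloring number. -/
noncomputable def wcol {V : Type*} [Fintype V] (G : SimpleGraph V) (k : ℕ) : ℕ :=
  sInf { n : ℕ | ∃ σ : V ↪ ℕ, ∀ x : V,
    ({ y : V | σ y ≤ σ x ∧ ∃ P : G.Walk x y, P.length ≤ k ∧
        ∀ z ∈ P.support, σ y ≤ σ z }).ncard ≤ n }

/-- Arboricity: the minimum number of forests needed to cover all edges of `G`. -/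
noncomputable def arb {V : Type*} (G : SimpleGraph V) : ℕ :=
  sInf { n : ℕ | ∃ f : Fin n → SimpleGraph V, (∀ i, (f i).IsAcyclic ∧ f i ≤ G) ∧
    ∀ e ∈ G.edgeSet, ∃ i, e ∈ (f i).edgeSet }

/-- Out-weight of a vertex under a weighting of edge orientations. -/
def outWeight {V : Type*} [Fintype V] (G : SimpleGraph V) [DecidableRel G.Adj]
    (w : V → V → ℝ) (u : V) : ℝ :=
  ∑ v ∈ G.neighborFinset u, w u v

/-- `w` is a weak orientation of `G`. -/
def IsWeakOrientation {V : Type*} (G : SimpleGraph V) (w : V → V → ℝ) : Prop :=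
  ∀ u v, G.Adj u v → 0 ≤ w u v ∧ w u v + w v u = 1

/-- Maximum out-weight. -/
noncomputable def maxOutWeight {V : Type*} [Fintype V] [Nonempty V] (G : SimpleGraph V)
    [DecidableRel G.Adj] (w : V → V → ℝ) : ℝ :=
  Finset.univ.sup' Finset.univ_nonempty (outWeight G w)

lemma mad_bddAbove {V : Type*} [Fintype V] (G : SimpleGraph V) :
    BddAbove { x : ℝ | ∃ H : G.Subgraph, H.verts.Nonempty ∧
      x = 2 * H.edgeSet.ncard / H.verts.ncard } := by
  refine ⟨2 * (Nat.card (Sym2 V)), ?_⟩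
  rintro x ⟨H, hne, rfl⟩
  have hv : (1 : ℝ) ≤ (H.verts.ncard : ℝ) := by
    have : 0 < H.verts.ncard := (Set.ncard_pos (Set.toFinite _)).mpr hne
    exact_mod_cast this
  have he : (H.edgeSet.ncard : ℝ) ≤ (Nat.card (Sym2 V) : ℝ) := by
    have := Set.ncard_le_ncard (Set.subset_univ H.edgeSet) Set.finite_univ
    rw [Set.ncard_univ] at this
    exact_mod_cast this
  calc 2 * (H.edgeSet.ncard : ℝ) / H.verts.ncard ≤ 2 * (H.edgeSet.ncard : ℝ) := by
        apply div_le_self (by positivity) hv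
    _ ≤ 2 * (Nat.card (Sym2 V) : ℝ) := by linarith

lemma subgraph_sparsity {V : Type*} [Fintype V] (G : SimpleGraph V) (k : ℕ)
    (h2 : mad G ≤ 2 * k) (H : G.Subgraph) : H.edgeSet.ncard ≤ k * H.verts.ncard := by
  rcases H.verts.eq_empty_or_nonempty with hv | hv
  · have : H.edgeSet = ∅ := by
      ext e
      refine e.ind (fun u v => ?_)
      simp only [SimpleGraph.Subgraph.mem_edgeSet, Set.mem_empty_iff_false, iff_false]
      intro h
      have := H.edge_vert h
      simp [hv] at this
    simp [this]
  · have hmem : (2 * H.edgeSet.ncard / H.verts.ncard : ℝ) ∈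
        { x : ℝ | ∃ H : G.Subgraph, H.verts.Nonempty ∧
          x = 2 * H.edgeSet.ncard / H.verts.ncard } := ⟨H, hv, rfl⟩
    have hle : (2 * H.edgeSet.ncard / H.verts.ncard : ℝ) ≤ 2 * k :=
      le_trans (le_csSup (mad_bddAbove G) hmem) h2
    have hvpos : (0 : ℝ) < H.verts.ncard := by
      have : 0 < H.verts.ncard := (Set.ncard_pos (Set.toFinite _)).mpr hv
      exact_mod_cast this
    rw [div_le_iff₀ hvpos] at hle
    have : (H.edgeSet.ncard : ℝ) ≤ (k : ℝ) * H.verts.ncard := by linarith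
    exact_mod_cast this


lemma exists_orientation {V : Type*} [Fintype V] (G : SimpleGraph V) [DecidableRel G.Adj]
    (k : ℕ) (hk : 1 ≤ k) (hmad : mad G ≤ 2 * k) :
    ∃ hd : V → V → Prop,
      (∀ u v, hd u v → G.Adj u v) ∧
      (∀ u v, G.Adj u v → hd u v ∨ hd v u) ∧
      (∀ u v, hd u v → ¬ hd v u) ∧
      (∀ u, {v | hd u v}.ncard ≤ k) := by
  classical
  let t : G.edgeSet → Finset (V × Fin k) :=
    fun e => (Finset.univ.filter (· ∈ e.1)) ×ˢ Finset.univ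
  have hall : ∀ s : Finset G.edgeSet, s.card ≤ (s.biUnion t).card := by
    intro s
    set W : Finset V := s.biUnion (fun e => Finset.univ.filter (· ∈ e.1)) with hW
    have hbi : s.biUnion t = W ×ˢ (Finset.univ : Finset (Fin k)) := by
      ext ⟨v, j⟩
      simp only [t, hW, Finset.mem_biUnion, Finset.mem_product, Finset.mem_filter,
        Finset.mem_univ, true_and, and_true]
    rw [hbi, Finset.card_product, Finset.card_univ, Fintype.card_fin]
    set H : G.Subgraph :=
      { verts := ↑W
        Adj := fun u v => G.Adj u v ∧ u ∈ W ∧ v ∈ W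
        adj_sub := fun h => h.1
        edge_vert := fun h => h.2.1
        symm := ⟨fun u v h => ⟨h.1.symm, h.2.2, h.2.1⟩⟩ } with hH
    have hends : ∀ e ∈ s, ∀ v, v ∈ (e : Sym2 V) → v ∈ W := by
      intro e he v hv
      exact Finset.mem_biUnion.mpr ⟨e, he, by simp [hv]⟩
    have himg : ↑(s.image (Subtype.val)) ⊆ H.edgeSet := by
      intro e he
      simp only [Finset.coe_image, Set.mem_image, Finset.mem_coe] at he
      obtain ⟨e', he', rfl⟩ := he
      have hex : ∃ u v, (e' : Sym2 V) = s(u, v) :=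
        Sym2.ind (fun u v => ⟨u, v, rfl⟩) (e' : Sym2 V)
      obtain ⟨u, v, huv⟩ := hex
      have hadj : G.Adj u v := G.mem_edgeSet.mp (huv ▸ e'.2)
      rw [huv]
      rw [SimpleGraph.Subgraph.mem_edgeSet]
      refine ⟨hadj, ?_, ?_⟩
      · exact hends e' he' u (by rw [huv]; exact Sym2.mem_mk_left u v)
      · exact hends e' he' v (by rw [huv]; exact Sym2.mem_mk_right u v)
    have hcard1 : s.card = (s.image Subtype.val).card :=
      (Finset.card_image_of_injective _ Subtype.val_injective).symm
    have hcard2 : (s.image Subtype.val).card ≤ H.edgeSet.ncard := by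
      rw [← Set.ncard_coe_finset]
      exact Set.ncard_le_ncard himg (Set.toFinite _)
    have hcard3 := subgraph_sparsity G k hmad H
    have hverts : H.verts.ncard = W.card := by
      rw [hH]
      exact Set.ncard_coe_finset W
    rw [hverts, mul_comm] at hcard3
    omega
  obtain ⟨f, hfinj, hfmem⟩ :=
    (Finset.all_card_le_biUnion_card_iff_exists_injective t).mp hall
  refine ⟨fun u v => ∃ h : G.Adj u v, (f ⟨s(u, v), h⟩).1 = u, ?_, ?_, ?_, ?_⟩
  · rintro u v ⟨h, -⟩; exact h
  · intro u v h
    have hmem := hfmem ⟨s(u, v), h⟩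
    simp only [t, Finset.mem_product, Finset.mem_filter, Finset.mem_univ, true_and,
      and_true] at hmem
    rcases Sym2.mem_iff.mp hmem with h1 | h1
    · exact Or.inl ⟨h, h1⟩
    · refine Or.inr ⟨h.symm, ?_⟩
      have : (⟨s(v, u), h.symm⟩ : G.edgeSet) = ⟨s(u, v), h⟩ := Subtype.ext (Sym2.eq_swap)
      rw [this, h1]
  · rintro u v ⟨h, h1⟩ ⟨h', h2⟩
    have : (⟨s(v, u), h'⟩ : G.edgeSet) = ⟨s(u, v), h⟩ := Subtype.ext (Sym2.eq_swap)
    rw [this, h1] at h2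
    exact h.ne h2
  · intro u
    have hset : {v | ∃ h : G.Adj u v, (f ⟨s(u, v), h⟩).1 = u} =
        ↑(Finset.univ.filter (fun v => ∃ h : G.Adj u v, (f ⟨s(u, v), h⟩).1 = u)) := by
      ext v; simp
    rw [hset, Set.ncard_coe_finset]
    have hle : (Finset.univ.filter (fun v => ∃ h : G.Adj u v, (f ⟨s(u, v), h⟩).1 = u)).card ≤
        (Finset.univ : Finset (Fin k)).card := by
      refine Finset.card_le_card_of_injOn
        (fun v => if h : G.Adj u v then (f ⟨s(u, v), h⟩).2 else ⟨0, hk⟩)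
        (fun _ _ => Finset.mem_univ _) ?_
      intro v1 hv1 v2 hv2 heq
      simp only [Finset.coe_filter, Set.mem_setOf_eq, Finset.mem_univ, true_and] at hv1 hv2
      obtain ⟨ha1, hb1⟩ := hv1
      obtain ⟨ha2, hb2⟩ := hv2
      simp only [dif_pos ha1, dif_pos ha2] at heq
      have hfeq : f ⟨s(u, v1), ha1⟩ = f ⟨s(u, v2), ha2⟩ := by
        apply Prod.ext
        · rw [hb1, hb2]
        · exact heq
      have := hfinj hfeq
      have hsym : s(u, v1) = s(u, v2) := congrArg Subtype.val this
      exact (Sym2.congr_right).mp hsym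
    simpa using hle

set_option linter.unusedSectionVars false

lemma numeric_aux (k a i d ins sig c : ℕ) (hk : 1 ≤ k) (ha : a ≤ k) (hai : a + i ≤ d)
    (hcov : c ≤ 1 + (a + ins) + a * (d - 1) + (i * (k - 1) + sig))
    (hphi : ins + sig ≤ 2 * k + (k - 1) * a) :
    c ≤ (2 * k - 1) * d + 2 * k + 1 := by
  rcases Nat.eq_zero_or_pos d with hd | hd
  · subst hd
    have ha0 : a = 0 := by omega
    have hi0 : i = 0 := by omega
    subst ha0; subst hi0
    simp at hcov ⊢
    omega
  · have h1 : (1:ℤ) ≤ (k:ℤ) := by exact_mod_cast hk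
    have h2 : (a:ℤ) ≤ (k:ℤ) := by exact_mod_cast ha
    have h3 : (a:ℤ) + i ≤ (d:ℤ) := by exact_mod_cast hai
    have h4 : (c:ℤ) ≤ 1 + (a + ins) + a * (d - 1) + (i * (k - 1) + sig) := by
      have := hcov
      zify [Nat.one_le_iff_ne_zero.mpr (by omega : d ≠ 0), hk] at this
      convert this using 2
    have h5 : (ins:ℤ) + sig ≤ 2 * k + (k - 1) * a := by
      have := hphi
      zify [hk] at this
      convert this using 2
    have hgoal : (c:ℤ) ≤ (2 * k - 1) * d + 2 * k + 1 := by
      have hd0 : (0:ℤ) ≤ (d:ℤ) := by positivity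
      have hp1 : ((k:ℤ) - 1) * ((a:ℤ) + i) ≤ ((k:ℤ) - 1) * d :=
        mul_le_mul_of_nonneg_left h3 (by linarith)
      have hp2 : (a:ℤ) * d ≤ (k:ℤ) * d := mul_le_mul_of_nonneg_right h2 hd0
      nlinarith [hp1, hp2]
    zify [show 1 ≤ 2 * k by omega] at hgoal ⊢
    convert hgoal using 2


section core

variable {V : Type*} [Fintype V] [DecidableEq V] (G : SimpleGraph V) [DecidableRel G.Adj]
  (hd : V → V → Prop) [DecidableRel hd] [DecidableRel (graphPow G 2).Adj]

def outF (u : V) : Finset V := Finset.univ.filter (fun v => hd u v)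

def innF (x : V) : Finset V := Finset.univ.filter (fun z => hd z x)

def inS (S : Finset V) (z : V) : ℕ := (S.filter (fun y => hd y z)).card

def cnt (S : Finset V) (x : V) : ℕ :=
  (S.filter (fun y => y = x ∨ (graphPow G 2).Adj x y)).card

variable {G hd}

lemma pow2_cases {x y : V} (h : (graphPow G 2).Adj x y) :
    G.Adj x y ∨ ∃ z, G.Adj x z ∧ G.Adj z y := by
  obtain ⟨hne, hr, hdist⟩ := h
  obtain ⟨p, hp⟩ := hr.exists_walk_length_eq_dist
  rw [← hp] at hdist
  cases p with
  | nil => exact absurd rfl (Ne.symm hne)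
  | cons hxz q =>
    cases q with
    | nil => exact Or.inl hxz
    | cons hzw q2 =>
      cases q2 with
      | nil => exact Or.inr ⟨_, hxz, hzw⟩
      | cons h3 q3 =>
        exfalso
        simp only [SimpleGraph.Walk.length_cons] at hdist
        omega

theorem cover_bound (hadj : ∀ u v, hd u v → G.Adj u v)
    (htotal : ∀ u v, G.Adj u v → hd u v ∨ hd v u) (k : ℕ)
    (hout : ∀ u, (outF hd u).card ≤ k)
    (S : Finset V) (x : V) :
    cnt G S x ≤ 1 + ((outF hd x).card + inS hd S x)
      + (outF hd x).card * (G.maxDegree - 1)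
      + ((innF hd x).card * (k - 1)
      + ∑ z ∈ innF hd x, inS hd S z) := by
  classical
  set A : Finset V := outF hd x ∪ S.filter (fun y => hd y x) with hA
  set B : Finset V := (outF hd x).biUnion (fun z => G.neighborFinset z \ {x}) with hB
  set C : Finset V := (innF hd x).biUnion
      (fun z => (outF hd z).erase x ∪ S.filter (fun y => hd y z)) with hC
  have hsub : S.filter (fun y => y = x ∨ (graphPow G 2).Adj x y) ⊆ insert x (A ∪ B ∪ C) := by
    intro y hy
    rw [Finset.mem_filter] at hy
    obtain ⟨hyS, hy2⟩ := hy
    rw [Finset.mem_insert]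
    rcases hy2 with rfl | hpow
    · exact Or.inl rfl
    refine Or.inr ?_
    have hyne : y ≠ x := fun h => hpow.1 h.symm
    simp only [hA, hB, hC, Finset.mem_union, Finset.mem_biUnion, Finset.mem_filter,
      Finset.mem_erase, Finset.mem_sdiff, Finset.mem_singleton,
      SimpleGraph.mem_neighborFinset, outF, innF, Finset.mem_univ, true_and]
    rcases pow2_cases hpow with hxy | ⟨z, hxz, hzy⟩
    · rcases htotal _ _ hxy with h | h
      · exact Or.inl (Or.inl (Or.inl h))
      · exact Or.inl (Or.inl (Or.inr ⟨hyS, h⟩))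
    · rcases htotal _ _ hxz with h | h
      · exact Or.inl (Or.inr ⟨z, h, hzy, hyne⟩)
      · rcases htotal _ _ hzy with h' | h'
        · exact Or.inr ⟨z, h, Or.inl ⟨hyne, h'⟩⟩
        · exact Or.inr ⟨z, h, Or.inr ⟨hyS, h'⟩⟩
  have hcard : cnt G S x ≤ 1 + (A.card + B.card + C.card) := by
    refine le_trans (Finset.card_le_card hsub) ?_
    refine le_trans (Finset.card_insert_le _ _) ?_
    have := Finset.card_union_le (A ∪ B) C
    have := Finset.card_union_le A B
    omega
  have hAcard : A.card ≤ (outF hd x).card + inS hd S x := Finset.card_union_le _ _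
  have hBcard : B.card ≤ (outF hd x).card * (G.maxDegree - 1) := by
    refine le_trans (Finset.card_biUnion_le) ?_
    refine le_trans (Finset.sum_le_card_nsmul _ _ (G.maxDegree - 1) ?_) (by rw [smul_eq_mul])
    intro z hz
    have hxz : G.Adj x z := hadj _ _ ((Finset.mem_filter.mp hz).2)
    have hxmem : {x} ⊆ G.neighborFinset z := by
      intro w hw
      rw [Finset.mem_singleton] at hw
      subst hw
      rw [SimpleGraph.mem_neighborFinset]
      exact hxz.symm
    rw [Finset.card_sdiff_of_subset hxmem, Finset.card_singleton,
      SimpleGraph.card_neighborFinset_eq_degree]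
    exact Nat.sub_le_sub_right (G.degree_le_maxDegree z) 1
  have hCcard : C.card ≤ (innF hd x).card * (k - 1) + ∑ z ∈ innF hd x, inS hd S z := by
    refine le_trans (Finset.card_biUnion_le) ?_
    have hptwise : ∀ z ∈ innF hd x,
        ((outF hd z).erase x ∪ S.filter (fun y => hd y z)).card ≤ (k - 1) + inS hd S z := by
      intro z hz
      refine le_trans (Finset.card_union_le _ _) ?_
      have hxout : x ∈ outF hd z := by
        rw [outF, Finset.mem_filter]
        exact ⟨Finset.mem_univ _, (Finset.mem_filter.mp hz).2⟩
      have : ((outF hd z).erase x).card = (outF hd z).card - 1 :=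
        Finset.card_erase_of_mem hxout
      have hk' : (outF hd z).card - 1 ≤ k - 1 := Nat.sub_le_sub_right (hout z) 1
      rw [inS]
      omega
    refine le_trans (Finset.sum_le_sum hptwise) ?_
    rw [Finset.sum_add_distrib, Finset.sum_const, smul_eq_mul, mul_comm]
  omega

theorem exists_phi (k : ℕ) (hk : 1 ≤ k) (hout : ∀ u, (outF hd u).card ≤ k)
    {S : Finset V} (hS : S.Nonempty) :
    ∃ x ∈ S, inS hd S x + ∑ z ∈ innF hd x, inS hd S z
      ≤ 2 * k + (k - 1) * (outF hd x).card := by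
  by_contra hcon
  push_neg at hcon
  have hlt := Finset.sum_lt_sum_of_nonempty hS hcon
  set A := ∑ y ∈ S, (outF hd y).card with hA
  have e1 : ∑ x ∈ S, inS hd S x ≤ A := by
    have he : ∑ x ∈ S, inS hd S x = ∑ y ∈ S, (S.filter (fun x => hd y x)).card := by
      simp_rw [inS, Finset.card_filter]
      exact Finset.sum_comm
    rw [he, hA]
    refine Finset.sum_le_sum (fun y _ => ?_)
    exact Finset.card_le_card (Finset.filter_subset_filter _ (Finset.subset_univ S))
  have euniv : ∑ z ∈ Finset.univ, inS hd S z = A := by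
    simp_rw [inS, Finset.card_filter, hA, outF]
    rw [Finset.sum_comm]
    refine Finset.sum_congr rfl (fun y _ => ?_)
    rw [Finset.card_filter]
  have e2 : ∑ x ∈ S, ∑ z ∈ innF hd x, inS hd S z ≤ k * A := by
    have swap : ∑ x ∈ S, ∑ z ∈ innF hd x, inS hd S z
        = ∑ z ∈ Finset.univ, (S.filter (fun x => hd z x)).card * inS hd S z := by
      simp_rw [innF, Finset.sum_filter]
      rw [Finset.sum_comm]
      refine Finset.sum_congr rfl (fun z _ => ?_)
      rw [← Finset.sum_filter, Finset.sum_const, smul_eq_mul]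
    rw [swap]
    calc ∑ z ∈ Finset.univ, (S.filter (fun x => hd z x)).card * inS hd S z
        ≤ ∑ z ∈ Finset.univ, k * inS hd S z := by
          refine Finset.sum_le_sum (fun z _ => ?_)
          refine Nat.mul_le_mul_right _ ?_
          refine le_trans (Finset.card_le_card
            (Finset.filter_subset_filter _ (Finset.subset_univ S))) (hout z)
      _ = k * A := by rw [← Finset.mul_sum, euniv]
  have hrhs : ∑ x ∈ S, (2 * k + (k - 1) * (outF hd x).card)
      = 2 * k * S.card + (k - 1) * A := by
    rw [Finset.sum_add_distrib, Finset.sum_const, smul_eq_mul, hA, Finset.mul_sum, mul_comm]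
  have hAle : A ≤ k * S.card := by
    rw [hA]
    refine le_trans (Finset.sum_le_card_nsmul _ _ k (fun y _ => hout y)) ?_
    rw [smul_eq_mul, mul_comm]
  have hkA : k * A = (k - 1) * A + A := by
    have : k = (k - 1) + 1 := by omega
    rw [this, add_mul, one_mul, Nat.add_sub_cancel]
  have hfinal : ∑ x ∈ S, (inS hd S x + ∑ z ∈ innF hd x, inS hd S z)
      ≤ 2 * k * S.card + (k - 1) * A := by
    rw [Finset.sum_add_distrib]
    have h2A : A + A ≤ 2 * k * S.card := by
      calc A + A ≤ k * S.card + k * S.card := add_le_add hAle hAle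
        _ = 2 * k * S.card := by ring
    calc ∑ x ∈ S, inS hd S x + ∑ x ∈ S, ∑ z ∈ innF hd x, inS hd S z
        ≤ A + k * A := add_le_add e1 e2
      _ = (k - 1) * A + (A + A) := by rw [hkA]; ring
      _ ≤ (k - 1) * A + 2 * k * S.card := Nat.add_le_add_left h2A _
      _ = 2 * k * S.card + (k - 1) * A := by ring
  rw [hrhs] at hlt
  exact lt_irrefl _ (lt_of_lt_of_le hlt hfinal)

theorem exists_good (hadj : ∀ u v, hd u v → G.Adj u v)
    (htotal : ∀ u v, G.Adj u v → hd u v ∨ hd v u)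
    (hanti : ∀ u v, hd u v → ¬ hd v u)
    (k : ℕ) (hk : 1 ≤ k) (hout : ∀ u, (outF hd u).card ≤ k)
    {S : Finset V} (hS : S.Nonempty) :
    ∃ x ∈ S, cnt G S x ≤ (2 * k - 1) * G.maxDegree + 2 * k + 1 := by
  obtain ⟨x, hxS, hphi⟩ := exists_phi k hk hout hS
  refine ⟨x, hxS, ?_⟩
  have hcov := cover_bound hadj htotal k hout S x
  have hax : (outF hd x).card ≤ k := hout x
  have hsum : (outF hd x).card + (innF hd x).card ≤ G.maxDegree := by
    have hdisj : Disjoint (outF hd x) (innF hd x) := by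
      rw [Finset.disjoint_left]
      intro v hv1 hv2
      exact hanti _ _ ((Finset.mem_filter.mp hv1).2) ((Finset.mem_filter.mp hv2).2)
    have hsubN : outF hd x ∪ innF hd x ⊆ G.neighborFinset x := by
      intro v hv
      rw [SimpleGraph.mem_neighborFinset]
      rcases Finset.mem_union.mp hv with h | h
      · exact hadj _ _ ((Finset.mem_filter.mp h).2)
      · exact (hadj _ _ ((Finset.mem_filter.mp h).2)).symm
    calc (outF hd x).card + (innF hd x).card
        = (outF hd x ∪ innF hd x).card := (Finset.card_union_of_disjoint hdisj).symm
      _ ≤ (G.neighborFinset x).card := Finset.card_le_card hsubN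
      _ = G.degree x := G.card_neighborFinset_eq_degree x
      _ ≤ G.maxDegree := G.degree_le_maxDegree x
  exact numeric_aux k (outF hd x).card (innF hd x).card G.maxDegree (inS hd S x)
    (∑ z ∈ innF hd x, inS hd S z) (cnt G S x) hk hax hsum hcov hphi

theorem build (hadj : ∀ u v, hd u v → G.Adj u v)
    (htotal : ∀ u v, G.Adj u v → hd u v ∨ hd v u)
    (hanti : ∀ u v, hd u v → ¬ hd v u)
    (k : ℕ) (hk : 1 ≤ k) (hout : ∀ u, (outF hd u).card ≤ k)
    (S : Finset V) : ∃ σ : V → ℕ,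
      (∀ x ∈ S, σ x < S.card) ∧
      (∀ x ∈ S, ∀ y ∈ S, σ x = σ y → x = y) ∧
      (∀ x ∈ S, cnt G (S.filter (fun y => σ y ≤ σ x)) x
        ≤ (2 * k - 1) * G.maxDegree + 2 * k + 1) := by
  induction S using Finset.strongInduction with
  | _ S ih =>
    rcases S.eq_empty_or_nonempty with rfl | hS
    · exact ⟨fun _ => 0, by simp, by simp, by simp⟩
    · obtain ⟨x, hxS, hx⟩ := exists_good hadj htotal hanti k hk hout hS
      obtain ⟨σ', h1', h2', h3'⟩ := ih (S.erase x) (Finset.erase_ssubset hxS)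
      set σ : V → ℕ := Function.update σ' x (S.card - 1) with hσ
      have hcard_erase : (S.erase x).card = S.card - 1 := Finset.card_erase_of_mem hxS
      have hagree : ∀ y ∈ S.erase x, σ y = σ' y := fun y hy =>
        Function.update_of_ne (Finset.ne_of_mem_erase hy) _ _
      have hσx : σ x = S.card - 1 := Function.update_self _ _ _
      have hlt : ∀ y ∈ S.erase x, σ y < S.card - 1 := by
        intro y hy
        rw [hagree y hy, ← hcard_erase]
        exact h1' y hy
      have hcardpos : 0 < S.card := Finset.card_pos.mpr hS
      refine ⟨σ, ?_, ?_, ?_⟩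
      · intro y hyS
        by_cases hne : y = x
        · rw [hne, hσx]; omega
        · have := hlt y (Finset.mem_erase.mpr ⟨hne, hyS⟩); omega
      · intro y hyS z hzS heq
        by_cases hny : y = x
        · by_cases hnz : z = x
          · rw [hny, hnz]
          · exfalso
            have := hlt z (Finset.mem_erase.mpr ⟨hnz, hzS⟩)
            rw [hny, hσx] at heq
            omega
        · by_cases hnz : z = x
          · exfalso
            have := hlt y (Finset.mem_erase.mpr ⟨hny, hyS⟩)
            rw [hnz, hσx] at heq
            omega
          · refine h2' y (Finset.mem_erase.mpr ⟨hny, hyS⟩) z (Finset.mem_erase.mpr ⟨hnz, hzS⟩) ?_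
            rw [← hagree y (Finset.mem_erase.mpr ⟨hny, hyS⟩),
              ← hagree z (Finset.mem_erase.mpr ⟨hnz, hzS⟩)]
            exact heq
      · intro y hyS
        by_cases hne : y = x
        · have hfull : S.filter (fun z => σ z ≤ σ y) = S := by
            refine Finset.filter_true_of_mem ?_
            intro z hzS
            by_cases hnz : z = x
            · rw [hnz, hne]
            · have := hlt z (Finset.mem_erase.mpr ⟨hnz, hzS⟩)
              rw [hne, hσx]
              omega
          rw [hfull, hne]
          exact hx
        · have hyE := Finset.mem_erase.mpr ⟨hne, hyS⟩
          have hfeq : S.filter (fun z => σ z ≤ σ y)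
              = (S.erase x).filter (fun z => σ' z ≤ σ' y) := by
            ext z
            simp only [Finset.mem_filter, Finset.mem_erase]
            constructor
            · rintro ⟨hzS, hle⟩
              have hzx : z ≠ x := by
                rintro rfl
                have h1 := hlt y hyE
                rw [hσx] at hle
                omega
              refine ⟨⟨hzx, hzS⟩, ?_⟩
              rw [← hagree z (Finset.mem_erase.mpr ⟨hzx, hzS⟩), ← hagree y hyE]
              exact hle
            · rintro ⟨⟨hzx, hzS⟩, hle⟩
              refine ⟨hzS, ?_⟩
              rw [hagree z (Finset.mem_erase.mpr ⟨hzx, hzS⟩), hagree y hyE]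
              exact hle
          rw [hfeq]
          exact h3' y hyE

end core

/-- Let k ≥ 1 be an integer and let G be a finite simple graph with
2k−2 < mad(G) ≤ 2k. Then col(G²) ≤ (2k−1)·Δ(G) + 2k + 1. -/
theorem stmt2 {V : Type*} [Fintype V] (G : SimpleGraph V) [DecidableRel G.Adj] (k : ℕ)
    (hk : 1 ≤ k) (h1 : (2 * k - 2 : ℝ) < mad G) (h2 : mad G ≤ 2 * k) :
    col (graphPow G 2) ≤ (2 * k - 1) * G.maxDegree + 2 * k + 1 := by
  classical
  obtain ⟨hd, hadj, htotal, hanti, houtn⟩ := exists_orientation G k hk h2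
  letI : DecidableRel hd := Classical.decRel _
  letI : DecidableRel (graphPow G 2).Adj := Classical.decRel _
  have hout : ∀ u, (outF hd u).card ≤ k := by
    intro u
    have h := houtn u
    have hseteq : {v | hd u v} = ↑(outF hd u) := by
      ext v; simp [outF]
    rwa [hseteq, Set.ncard_coe_finset] at h
  obtain ⟨hltσ, hinj, hbound⟩ :=
    (build hadj htotal hanti k hk hout Finset.univ).choose_spec
  set σ := (build hadj htotal hanti k hk hout Finset.univ).choose with hσdef
  have hinj' : Function.Injective σ := by
    intro a b h
    exact hinj a (Finset.mem_univ a) b (Finset.mem_univ b) h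
  refine Nat.sInf_le ⟨⟨σ, hinj'⟩, ?_⟩
  intro x
  have hx := hbound x (Finset.mem_univ x)
  have hseteq : { y : V | (⟨σ, hinj'⟩ : V ↪ ℕ) y ≤ (⟨σ, hinj'⟩ : V ↪ ℕ) x
        ∧ (y = x ∨ (graphPow G 2).Adj x y) }
      = ↑((Finset.univ.filter (fun y => σ y ≤ σ x)).filter
          (fun y => y = x ∨ (graphPow G 2).Adj x y)) := by
    ext y
    simp only [Finset.coe_filter, Finset.mem_filter, Finset.mem_univ, true_and,
      Set.mem_setOf_eq, Function.Embedding.coeFn_mk]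
  rw [hseteq, Set.ncard_coe_finset]
  exact hx
end

section
/- Every finite simple graph G with at least one vertex admits a weak orientation w such that 2·Δ_w⁺(G) ≤ mad(G); consequently the minimum of 2·Δ_w⁺(G) over all weak orientations w of G equals mad(G). -/
/-!
`mad G ≤ 2 Δ_w⁺` for every weak orientation `w`: each edge of a subgraph `H` carries total
weight `1`, so `|E(H)| ≤ Σ_{u ∈ V(H)} w⁺(u) ≤ |V(H)| Δ_w⁺`.

A weak orientation with `2 Δ_w⁺ ≤ mad G`: minimise `Σ_u w⁺(u)²` over the compact set of weak
orientations with values in `[0, 1]`. At a minimiser no arc `(u, v)` with `w(u, v) > 0` has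
`w⁺(u) > w⁺(v)`, since moving a little weight from `(u, v)` to `(v, u)` would lower the sum. Hence
the set `A` of vertices of maximum out-weight `t` keeps all its positive weight inside, and the
subgraph induced on `A` has exactly `|A| t` edges, so `2t ≤ mad G`.
-/

open Finset SimpleGraph

section Handshake
variable {V : Type*} [Fintype V]

theorem SimpleGraph.sum_sum_neighborFinset_eq_card_edgeFinset (H : SimpleGraph V)
    [DecidableRel H.Adj] {w : V → V → ℝ} (hw : ∀ u v, H.Adj u v → w u v + w v u = 1) :
    ∑ u, ∑ v ∈ H.neighborFinset u, w u v = #H.edgeFinset := by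
  have hswap : ∑ u, ∑ v ∈ H.neighborFinset u, w u v = ∑ u, ∑ v ∈ H.neighborFinset u, w v u :=
    sum_comm' (by simp [H.adj_comm])
  have hpair : ∑ u, ∑ v ∈ H.neighborFinset u, (w u v + w v u) = 2 * #H.edgeFinset :=
    calc ∑ u, ∑ v ∈ H.neighborFinset u, (w u v + w v u) = ∑ u, (H.degree u : ℝ) :=
          sum_congr rfl fun u _ => by
            rw [sum_congr rfl fun v hv => hw u v ((H.mem_neighborFinset u v).1 hv), sum_const,
              card_neighborFinset_eq_degree, nsmul_one]
      _ = 2 * #H.edgeFinset := by exact_mod_cast H.sum_degrees_eq_twice_card_edges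
  simp only [sum_add_distrib] at hpair
  linarith

theorem SimpleGraph.Subgraph.sum_sum_adj_eq_ncard_edgeSet {G : SimpleGraph V} (H : G.Subgraph)
    [DecidableRel H.Adj] {w : V → V → ℝ} (hw : ∀ u v, H.Adj u v → w u v + w v u = 1) :
    ∑ u, ∑ v ∈ univ.filter (H.Adj u), w u v = H.edgeSet.ncard := by
  have : DecidableRel H.spanningCoe.Adj := ‹DecidableRel H.Adj›
  rw [← edgeSet_spanningCoe, ← coe_edgeFinset, Set.ncard_coe_finset,
    ← H.spanningCoe.sum_sum_neighborFinset_eq_card_edgeFinset hw]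
  simp only [neighborFinset_eq_filter, Subgraph.spanningCoe_adj]

end Handshake

section Mad
variable {V : Type*}

theorem bddAbove_madSet [Finite V] (G : SimpleGraph V) :
    BddAbove { x : ℝ | ∃ H : G.Subgraph, H.verts.Nonempty ∧
      x = 2 * H.edgeSet.ncard / H.verts.ncard } :=
  ((Set.finite_range fun H : G.Subgraph => 2 * (H.edgeSet.ncard : ℝ) / H.verts.ncard).subset
    (by rintro _ ⟨H, -, rfl⟩; exact ⟨H, rfl⟩)).bddAbove

theorem le_mad [Finite V] {G : SimpleGraph V} (H : G.Subgraph) (hH : H.verts.Nonempty) :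
    2 * (H.edgeSet.ncard : ℝ) / H.verts.ncard ≤ mad G :=
  le_csSup (bddAbove_madSet G) ⟨H, hH, rfl⟩

theorem mad_le [Nonempty V] {G : SimpleGraph V} {c : ℝ}
    (h : ∀ H : G.Subgraph, H.verts.Nonempty → 2 * (H.edgeSet.ncard : ℝ) / H.verts.ncard ≤ c) :
    mad G ≤ c :=
  csSup_le ⟨_, ⊤, by simp [Set.univ_nonempty], rfl⟩ (by rintro _ ⟨H, hH, rfl⟩; exact h H hH)

end Mad

section BoundedWeakOrientations
variable {V : Type*} {G : SimpleGraph V} {w : V → V → ℝ}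

/-- Bounding also the values at non-edges, which a weak orientation leaves free, makes this set
compact. -/
def boundedWeakOrientations (G : SimpleGraph V) : Set (V → V → ℝ) :=
  {w | IsWeakOrientation G w} ∩ Set.univ.pi fun _ => Set.univ.pi fun _ => Set.Icc 0 1

variable (G) in
theorem isCompact_boundedWeakOrientations : IsCompact (boundedWeakOrientations G) := by
  refine (isCompact_univ_pi fun _ => isCompact_univ_pi fun _ => isCompact_Icc).inter_left ?_
  simp only [IsWeakOrientation, Set.ofPred_forall, Set.ofPred_and]
  exact isClosed_iInter fun u => isClosed_iInter fun v => isClosed_iInter fun _ =>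
    (isClosed_le continuous_const (by fun_prop)).inter (isClosed_eq (by fun_prop) continuous_const)

variable (G) in
theorem boundedWeakOrientations_nonempty : (boundedWeakOrientations G).Nonempty :=
  ⟨fun _ _ => 1 / 2, fun _ _ _ => by norm_num, fun _ _ _ _ => by norm_num⟩

/-- Moves weight `ε` from the arc `(u, v)` to the arc `(v, u)`. -/
def transferWeight [DecidableEq V] (w : V → V → ℝ) (u v : V) (ε : ℝ) : V → V → ℝ := fun a b =>
  w a b + (if a = v ∧ b = u then ε else 0) - (if a = u ∧ b = v then ε else 0)

theorem transferWeight_mem_boundedWeakOrientations [DecidableEq V]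
    (hw : w ∈ boundedWeakOrientations G) {u v : V} (huv : G.Adj u v) {ε : ℝ} (hε : 0 ≤ ε)
    (hεw : ε ≤ w u v) : transferWeight w u v ε ∈ boundedWeakOrientations G := by
  obtain ⟨hwo, hwI⟩ := hw
  have hne := G.ne_of_adj huv
  have hsum := (hwo u v huv).2
  have hvu := (hwo v u huv.symm).1
  have hle := (hwI u trivial v trivial).2
  have hother : ∀ a b, ¬(a = u ∧ b = v) → ¬(a = v ∧ b = u) → transferWeight w u v ε a b = w a b :=
    fun a b h₁ h₂ => by simp only [transferWeight, if_neg h₁, if_neg h₂, add_zero, sub_zero]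
  have huv' : transferWeight w u v ε u v = w u v - ε := by simp [transferWeight, hne]
  have hvu' : transferWeight w u v ε v u = w v u + ε := by simp [transferWeight, hne]
  refine ⟨fun a b hab => ?_, fun a _ b _ => ?_⟩ <;>
  obtain ⟨rfl, rfl⟩ | ⟨rfl, rfl⟩ | ⟨h₁, h₂⟩ :
      (a = u ∧ b = v) ∨ (a = v ∧ b = u) ∨ (¬(a = u ∧ b = v) ∧ ¬(a = v ∧ b = u)) := by tauto
  · rw [huv', hvu']; constructor <;> linarith
  · rw [huv', hvu']; constructor <;> linarith
  · rw [hother a b h₁ h₂, hother b a (by tauto) (by tauto)]; exact hwo a b hab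
  · rw [huv']; constructor <;> linarith
  · rw [hvu']; constructor <;> linarith
  · rw [hother a b h₁ h₂]; exact hwI a trivial b trivial

end BoundedWeakOrientations

section OutWeight
variable {V : Type*} [Fintype V] {G : SimpleGraph V} [DecidableRel G.Adj] {w : V → V → ℝ}

theorem ncard_edgeSet_le_ncard_verts_mul_maxOutWeight [Nonempty V] (hw : IsWeakOrientation G w)
    (H : G.Subgraph) : (H.edgeSet.ncard : ℝ) ≤ H.verts.ncard * maxOutWeight G w := by
  classical
  rw [← H.sum_sum_adj_eq_ncard_edgeSet fun u v h => (hw u v h.adj_sub).2,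
    Set.ncard_eq_toFinset_card', ← nsmul_eq_mul]
  calc ∑ u, ∑ v ∈ univ.filter (H.Adj u), w u v
      = ∑ u ∈ H.verts.toFinset, ∑ v ∈ univ.filter (H.Adj u), w u v :=
        (sum_subset (subset_univ _) fun u _ hu => sum_eq_zero fun v hv =>
          absurd (mem_filter.1 hv).2.fst_mem (by simpa using hu)).symm
    _ ≤ ∑ u ∈ H.verts.toFinset, outWeight G w u :=
        sum_le_sum fun u _ => sum_le_sum_of_subset_of_nonneg
          (fun v hv => (G.mem_neighborFinset u v).2 (mem_filter.1 hv).2.adj_sub)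
          fun v hv _ => (hw u v ((G.mem_neighborFinset u v).1 hv)).1
    _ ≤ #H.verts.toFinset • maxOutWeight G w :=
        sum_le_card_nsmul _ _ _ fun u _ => le_sup' _ (mem_univ u)

theorem mad_le_two_mul_maxOutWeight [Nonempty V] (hw : IsWeakOrientation G w) :
    mad G ≤ 2 * maxOutWeight G w :=
  mad_le fun H hH => by
    have hpos : (0 : ℝ) < H.verts.ncard := by exact_mod_cast (Set.ncard_pos H.verts.toFinite).2 hH
    rw [div_le_iff₀ hpos]
    linarith [ncard_edgeSet_le_ncard_verts_mul_maxOutWeight hw H]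

theorem ncard_edgeSet_induce_eq_ncard_mul (hw : IsWeakOrientation G w) {A : Set V} {t : ℝ}
    (hA : ∀ u ∈ A, outWeight G w u = t) (hclosed : ∀ u ∈ A, ∀ v, G.Adj u v → 0 < w u v → v ∈ A) :
    (((⊤ : G.Subgraph).induce A).edgeSet.ncard : ℝ) = A.ncard * t := by
  classical
  set H := (⊤ : G.Subgraph).induce A
  have hinner : ∀ u, ∑ v ∈ univ.filter (H.Adj u), w u v = if u ∈ A then t else 0 := by
    intro u
    split_ifs with hu
    · rw [← hA u hu, outWeight, G.neighborFinset_eq_filter]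
      refine sum_subset (fun v hv => ?_) fun v hv hvH => ?_
      · simp only [H, mem_filter, Subgraph.induce_adj, Subgraph.top_adj] at hv ⊢
        exact ⟨hv.1, hv.2.2.2⟩
      · simp only [H, mem_filter, Subgraph.induce_adj, Subgraph.top_adj, mem_univ, true_and,
          not_and] at hv hvH
        exact le_antisymm (not_lt.1 fun hpos => hvH hu (hclosed u hu v hv hpos) hv) (hw u v hv).1
    · exact sum_eq_zero fun v hv => absurd (mem_filter.1 hv).2.1 hu
  rw [← H.sum_sum_adj_eq_ncard_edgeSet fun u v h => (hw u v h.adj_sub).2,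
    sum_congr rfl fun u _ => hinner u, ← sum_filter, sum_const, nsmul_eq_mul,
    Set.filter_mem_univ_eq_toFinset, Set.ncard_eq_toFinset_card']

def outWeightEnergy (G : SimpleGraph V) [DecidableRel G.Adj] (w : V → V → ℝ) : ℝ :=
  ∑ u, outWeight G w u ^ 2

variable (G) in
theorem continuous_outWeightEnergy : Continuous (outWeightEnergy G) := by
  unfold outWeightEnergy outWeight
  fun_prop

theorem outWeight_transferWeight [DecidableEq V] {u v : V} (huv : G.Adj u v) (ε : ℝ) (x : V) :
    outWeight G (transferWeight w u v ε) x =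
      outWeight G w x + (if x = v then ε else 0) - (if x = u then ε else 0) := by
  simp only [outWeight, transferWeight, sum_add_distrib, sum_sub_distrib, ite_and]
  split_ifs <;> simp_all [G.adj_comm]

theorem outWeightEnergy_transferWeight [DecidableEq V] {u v : V} (huv : G.Adj u v) (ε : ℝ) :
    outWeightEnergy G (transferWeight w u v ε) =
      outWeightEnergy G w - 2 * ε * (outWeight G w u - outWeight G w v - ε) := by
  have hne := G.ne_of_adj huv
  suffices ∑ x, (outWeight G (transferWeight w u v ε) x ^ 2 - outWeight G w x ^ 2) =
      -(2 * ε * (outWeight G w u - outWeight G w v - ε)) by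
    rw [sum_sub_distrib] at this
    rw [outWeightEnergy, outWeightEnergy]
    linarith
  rw [sum_eq_add u v hne (fun x _ hx => by simp [outWeight_transferWeight huv, hx.1, hx.2])
    (by simp) (by simp)]
  simp only [outWeight_transferWeight huv, if_pos, if_neg hne, if_neg hne.symm]
  ring

theorem outWeight_le_of_isMinOn (hmin : IsMinOn (outWeightEnergy G) (boundedWeakOrientations G) w)
    (hw : w ∈ boundedWeakOrientations G) {u v : V} (huv : G.Adj u v) (hpos : 0 < w u v) :
    outWeight G w u ≤ outWeight G w v := by
  classical
  by_contra! hlt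
  set ε := min (w u v) ((outWeight G w u - outWeight G w v) / 2)
  have hε : 0 < ε := lt_min hpos (by linarith)
  have hε' : ε ≤ (outWeight G w u - outWeight G w v) / 2 := min_le_right _ _
  have hle := hmin (transferWeight_mem_boundedWeakOrientations hw huv hε.le (min_le_left _ _))
  rw [Set.mem_ofPred_eq, outWeightEnergy_transferWeight huv] at hle
  nlinarith

variable (G) in
theorem exists_isWeakOrientation_two_mul_maxOutWeight_le_mad [Nonempty V] :
    ∃ w, IsWeakOrientation G w ∧ 2 * maxOutWeight G w ≤ mad G := by
  obtain ⟨w, hwK, hmin⟩ := (isCompact_boundedWeakOrientations G).exists_isMinOn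
    (boundedWeakOrientations_nonempty G) (continuous_outWeightEnergy G).continuousOn
  set t := maxOutWeight G w
  set A : Set V := {u | outWeight G w u = t}
  have hA : A.Nonempty :=
    let ⟨u, _, hu⟩ := exists_mem_eq_sup' univ_nonempty (outWeight G w)
    ⟨u, hu.symm⟩
  have hclosed : ∀ u ∈ A, ∀ v, G.Adj u v → 0 < w u v → v ∈ A := fun u hu v huv hpos =>
    le_antisymm (le_sup' _ (mem_univ v)) (hu ▸ outWeight_le_of_isMinOn hmin hwK huv hpos)
  have hpos : (0 : ℝ) < A.ncard := by exact_mod_cast (Set.ncard_pos A.toFinite).2 hA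
  refine ⟨w, hwK.1, ?_⟩
  calc 2 * t = 2 * (((⊤ : G.Subgraph).induce A).edgeSet.ncard : ℝ) /
        ((⊤ : G.Subgraph).induce A).verts.ncard := by
        rw [ncard_edgeSet_induce_eq_ncard_mul (A := A) hwK.1 (fun _ hu => hu) hclosed,
          show ((⊤ : G.Subgraph).induce A).verts = A from rfl]
        field_simp
    _ ≤ mad G := le_mad _ hA

end OutWeight

/-- Every finite simple graph G with at least one vertex admits a weak
orientation w with 2·Δ_w⁺(G) ≤ mad(G); consequently the minimum of 2·Δ_w⁺(G) over all weak
orientations w of G equals mad(G). -/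
theorem stmt7 {V : Type*} [Fintype V] [Nonempty V] (G : SimpleGraph V) [DecidableRel G.Adj] :
    (∃ w : V → V → ℝ, IsWeakOrientation G w ∧ 2 * maxOutWeight G w ≤ mad G) ∧
    IsLeast { x : ℝ | ∃ w : V → V → ℝ, IsWeakOrientation G w ∧ x = 2 * maxOutWeight G w }
      (mad G) := by
  obtain ⟨w, hw, hle⟩ := exists_isWeakOrientation_two_mul_maxOutWeight_le_mad G
  refine ⟨⟨w, hw, hle⟩, ⟨w, hw, le_antisymm (mad_le_two_mul_maxOutWeight hw) hle⟩, ?_⟩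
  rintro _ ⟨w', hw', rfl⟩
  exact mad_le_two_mul_maxOutWeight hw'
end

section
/- Let k ≥ 0 be an integer and let G be a finite simple graph with mad(G) ≤ 2k. Then G admits an orientation of its edges in which every vertex has outdegree at most k. -/
namespace SimpleGraph

variable {V : Type*} {G : SimpleGraph V}

lemma le_mad [Finite V] (H : G.Subgraph) (hH : H.verts.Nonempty) :
    2 * (H.edgeSet.ncard : ℝ) / H.verts.ncard ≤ mad G := by
  refine le_csSup ⟨2 * Nat.card (Sym2 V), ?_⟩ ⟨H, hH, rfl⟩
  rintro x ⟨H, hH, rfl⟩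
  have hverts : (1 : ℝ) ≤ H.verts.ncard := by exact_mod_cast (Set.ncard_pos).mpr hH
  have hedges : (H.edgeSet.ncard : ℝ) ≤ Nat.card (Sym2 V) := by
    exact_mod_cast Set.ncard_le_card H.edgeSet
  calc 2 * (H.edgeSet.ncard : ℝ) / H.verts.ncard ≤ 2 * H.edgeSet.ncard :=
        div_le_self (by positivity) hverts
    _ ≤ 2 * Nat.card (Sym2 V) := by linarith

def Subgraph.ofEdges (s : Set (Sym2 V)) (hs : s ⊆ G.edgeSet) : G.Subgraph where
  verts := {v | ∃ e ∈ s, v ∈ e}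
  Adj u v := s(u, v) ∈ s
  adj_sub h := hs h
  edge_vert h := ⟨_, h, Sym2.mem_mk_left _ _⟩
  symm := ⟨fun _ _ h => by rwa [Sym2.eq_swap]⟩

@[simp]
lemma Subgraph.edgeSet_ofEdges (s : Set (Sym2 V)) (hs : s ⊆ G.edgeSet) :
    (Subgraph.ofEdges s hs).edgeSet = s := by
  ext e
  induction e using Sym2.ind
  exact Subgraph.mem_edgeSet

lemma card_le_mul_card_biUnion_of_mad_le [Finite V] [DecidableEq V] {k : ℕ} (h : mad G ≤ 2 * k)
    (S : Finset (Sym2 V)) (hS : ↑S ⊆ G.edgeSet) :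
    S.card ≤ k * (S.biUnion Sym2.toFinset).card := by
  rcases S.eq_empty_or_nonempty with rfl | ⟨e, he⟩
  · simp
  set H := Subgraph.ofEdges (S : Set (Sym2 V)) hS
  have hverts : H.verts = ↑(S.biUnion Sym2.toFinset) := by
    ext v
    simp [H, Subgraph.ofEdges]
  have hW : (S.biUnion Sym2.toFinset).Nonempty :=
    ⟨e.out.1, Finset.mem_biUnion.mpr ⟨e, he, Sym2.mem_toFinset.mpr e.out_fst_mem⟩⟩
  have hdensity := (le_mad H (by rw [hverts]; exact_mod_cast hW)).trans h
  rw [Subgraph.edgeSet_ofEdges, hverts, Set.ncard_coe_finset, Set.ncard_coe_finset,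
    div_le_iff₀ (by exact_mod_cast hW.card_pos)] at hdensity
  exact_mod_cast (by linarith : (S.card : ℝ) ≤ k * (S.biUnion Sym2.toFinset).card)


/-- The density bound `card_le_mul_card_biUnion_of_mad_le` is exactly Hall's condition for
giving each edge its own slot among the `k` slots `{v} × Fin k` of one of its endpoints `v`. -/
lemma exists_injective_slot_of_mad_le [Fintype V] {k : ℕ} (h : mad G ≤ 2 * k) :
    ∃ f : G.edgeSet → V × Fin k,
      Function.Injective f ∧ ∀ e : G.edgeSet, (f e).1 ∈ (e : Sym2 V) := by
  classical
  let t : G.edgeSet → Finset (V × Fin k) := fun e => (e : Sym2 V).toFinset ×ˢ Finset.univ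
  have hall : ∀ S : Finset G.edgeSet, S.card ≤ (S.biUnion t).card := by
    intro S
    let T := S.map (Function.Embedding.subtype _)
    have hT : S.biUnion t = T.biUnion Sym2.toFinset ×ˢ Finset.univ := by
      ext ⟨v, i⟩
      simp [t, T]
    rw [hT, Finset.card_product, Finset.card_univ, Fintype.card_fin, mul_comm, ← S.card_map]
    refine card_le_mul_card_biUnion_of_mad_le h T ?_
    rw [Finset.coe_map]
    rintro _ ⟨e, -, rfl⟩
    exact e.2
  obtain ⟨f, hf, hft⟩ := (Finset.all_card_le_biUnion_card_iff_exists_injective t).mp hall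
  exact ⟨f, hf, fun e => Sym2.mem_toFinset.mp (Finset.mem_product.mp (hft e)).1⟩


def tailOrientation (τ : G.edgeSet → V) (u v : V) : Prop :=
  ∃ h : G.Adj u v, τ ⟨s(u, v), h⟩ = u

section tailOrientation

variable {τ : G.edgeSet → V}

lemma edgeSet_mk_swap {u v : V} (h : G.Adj u v) :
    (⟨s(v, u), h.symm⟩ : G.edgeSet) = ⟨s(u, v), h⟩ :=
  Subtype.ext Sym2.eq_swap

lemma adj_iff_tailOrientation (hτ : ∀ e : G.edgeSet, τ e ∈ (e : Sym2 V)) {u v : V} :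
    G.Adj u v ↔ tailOrientation τ u v ∨ tailOrientation τ v u := by
  refine ⟨fun huv => ?_, by rintro (⟨huv, -⟩ | ⟨hvu, -⟩); exacts [huv, hvu.symm]⟩
  rcases Sym2.mem_iff.mp (hτ ⟨s(u, v), huv⟩) with hu | hv
  · exact .inl ⟨huv, hu⟩
  · exact .inr ⟨huv.symm, by rwa [edgeSet_mk_swap]⟩

lemma not_tailOrientation_and_swap (u v : V) :
    ¬ (tailOrientation τ u v ∧ tailOrientation τ v u) := by
  rintro ⟨⟨huv, hu⟩, ⟨hvu, hv⟩⟩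
  rw [edgeSet_mk_swap huv] at hv
  exact huv.ne (hu.symm.trans hv)

lemma ncard_tailOrientation_le {k : ℕ} {f : G.edgeSet → V × Fin k} (hf : Function.Injective f)
    (u : V) : {v | tailOrientation (fun e => (f e).1) u v}.ncard ≤ k := by
  let slot : {v | tailOrientation (fun e => (f e).1) u v} → Fin k :=
    fun v => (f ⟨s(u, v), v.2.1⟩).2
  have hslot : Function.Injective slot := by
    rintro ⟨a, ha, hua⟩ ⟨b, hb, hub⟩ hab
    have hedge := congrArg Subtype.val (hf (Prod.ext (hua.trans hub.symm) hab))
    exact Subtype.ext (Sym2.congr_right.mp hedge)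
  simpa using Nat.card_le_card_of_injective slot hslot

end tailOrientation

end SimpleGraph

/-- Let k ≥ 0 be an integer and let G be a finite simple graph with mad(G) ≤ 2k.
Then G admits an orientation of its edges in which every vertex has outdegree at most k. -/
theorem stmt8 {V : Type*} [Fintype V] (G : SimpleGraph V) (k : ℕ) (h : mad G ≤ 2 * k) :
    ∃ D : V → V → Prop, (∀ u v, G.Adj u v ↔ (D u v ∨ D v u)) ∧
      (∀ u v, ¬ (D u v ∧ D v u)) ∧ ∀ u, ({ v | D u v }).ncard ≤ k := by
  obtain ⟨f, hf, hfe⟩ := SimpleGraph.exists_injective_slot_of_mad_le h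
  exact ⟨SimpleGraph.tailOrientation fun e => (f e).1,
    fun _ _ => SimpleGraph.adj_iff_tailOrientation hfe,
    SimpleGraph.not_tailOrientation_and_swap, SimpleGraph.ncard_tailOrientation_le hf⟩
end

section
/- For all integers p ≥ 1 and Δ ≥ 1 and every finite simple graph G with maximum degree at most Δ, arb(G^p) ≤ 2^{p+1} · arb(G)^{⌈p/2⌉} · Δ^{⌊p/2⌋}. -/
/-!
Orienting every forest of an optimal cover of `G` towards a root of each component gives each
vertex at most `a = arb G` out-neighbours. Record a walk by its pattern, the list telling which
steps go along an out-edge; a walk and its reverse take at least `ℓ` such steps between them. Give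
the pair `(x, y)` weight 2, 1 or 0 according as some shortest walk from `x` to `y` takes more
than, exactly or less than half of its `ℓ` steps along out-edges: then every edge of `G^p`
carries total weight at least 2. A pattern of positive weight has at least `ℓ / 2` out-steps, so
(as `a ≤ Δ`) it leads from `x` to at most `a^⌈p/2⌉ Δ^⌊p/2⌋` vertices, and complementary patterns
have weights summing to 2; hence the weight leaving `x` is at most
`∑_{ℓ ≤ p} 2^ℓ a^⌈p/2⌉ Δ^⌊p/2⌋ < 2^(p+1) a^⌈p/2⌉ Δ^⌊p/2⌋`. By double counting, every vertex set
then contains a vertex with at most that many neighbours inside it, and such a degenerate graph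
is covered by that many forests: remove that vertex and hang its edges on distinct forests.
-/

open Finset
open scoped Classical

namespace SimpleGraph

variable {V : Type*}

def IsDegenerate (H : SimpleGraph V) (k : ℕ) : Prop :=
  ∀ S : Finset V, S.Nonempty → ∃ x ∈ S, #{y ∈ S | H.Adj x y} ≤ k

structure IsForestCoverOn {ι : Type*} (H : SimpleGraph V) (S : Set V) (f : ι → SimpleGraph V) :
    Prop where
  isAcyclic : ∀ i, (f i).IsAcyclic
  le : ∀ i, f i ≤ H
  support_subset : ∀ i, (f i).support ⊆ S
  exists_adj : ∀ u ∈ S, ∀ v ∈ S, H.Adj u v → ∃ i, (f i).Adj u v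

lemma not_reachable_of_notMem_support {F : SimpleGraph V} {x y : V} (hx : x ∉ F.support)
    (hxy : x ≠ y) : ¬ F.Reachable x y := by
  rintro ⟨q⟩
  cases q with
  | nil => exact hxy rfl
  | cons h _ => exact hx h.mem_support_left

lemma IsForestCoverOn.insert {H : SimpleGraph V} {k : ℕ} {S : Finset V} {x : V}
    {f : Fin k → SimpleGraph V} (hf : H.IsForestCoverOn S f) (hxS : x ∉ S)
    (hx : #{y ∈ S | H.Adj x y} ≤ k) :
    ∃ f' : Fin k → SimpleGraph V, H.IsForestCoverOn (insert x S) f' := by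
  set N := {y ∈ S | H.Adj x y}
  -- the `i`-th forest receives the edge from `x` to the `i`-th element of `N`, if any
  set g : Fin k → Option V := fun i => N.toList[(i : ℕ)]?
  have hgN : ∀ i y, g i = some y → y ∈ S ∧ H.Adj x y := fun i y h => by
    simpa [N] using List.mem_of_getElem? h
  have hNg : ∀ y ∈ N, ∃ i, g i = some y := fun y hy => by
    obtain ⟨n, hn, hny⟩ := List.getElem_of_mem (mem_toList.mpr hy)
    exact ⟨⟨n, (length_toList N ▸ hn).trans_le hx⟩, hny ▸ List.getElem?_eq_getElem hn⟩
  refine ⟨fun i => f i ⊔ (g i).elim ⊥ (edge x), ⟨fun i => ?_, fun i => ?_, fun i => ?_, ?_⟩⟩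
  · cases hi : g i with
    | none => simpa using hf.isAcyclic i
    | some y =>
      obtain ⟨hyS, -⟩ := hgN i y hi
      exact (hf.isAcyclic i).sup_edge_of_not_reachable (not_reachable_of_notMem_support
        (fun h => hxS (hf.support_subset i h)) (by rintro rfl; exact hxS hyS))
  · cases hi : g i with
    | none => simpa using hf.le i
    | some y => exact sup_le (hf.le i) ((edge_le_iff H).mpr (Or.inr (hgN i y hi).2))
  · rintro u ⟨w, hw⟩
    cases hi : g i with
    | none =>
      simp only [hi, Option.elim_none, sup_bot_eq] at hw
      exact Set.mem_insert_of_mem _ (hf.support_subset i hw.mem_support_left)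
    | some y =>
      simp only [hi, Option.elim_some, sup_adj, edge_adj] at hw
      rcases hw with hw | ⟨⟨rfl, -⟩ | ⟨rfl, -⟩, -⟩
      · exact Set.mem_insert_of_mem _ (hf.support_subset i hw.mem_support_left)
      · exact Set.mem_insert _ _
      · exact Set.mem_insert_of_mem _ (hgN i u hi).1
  · have hxadj : ∀ v ∈ S, H.Adj x v → ∃ i, (f i ⊔ (g i).elim ⊥ (edge x)).Adj x v := by
      intro v hv hxv
      obtain ⟨i, hi⟩ := hNg v (by simp [N, hv, hxv])
      exact ⟨i, Or.inr (by simp [hi, edge_adj, hxv.ne])⟩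
    intro u hu v hv huv
    simp only [Set.mem_insert_iff, mem_coe] at hu hv
    rcases hu with rfl | hu <;> rcases hv with rfl | hv
    · exact absurd huv (H.loopless.irrefl _)
    · exact hxadj v hv huv
    · obtain ⟨i, hi⟩ := hxadj u hu huv.symm
      exact ⟨i, hi.symm⟩
    · obtain ⟨i, hi⟩ := hf.exists_adj u hu v hv huv
      exact ⟨i, Or.inl hi⟩

lemma IsDegenerate.exists_isForestCoverOn {H : SimpleGraph V} {k : ℕ} (h : H.IsDegenerate k)
    (S : Finset V) : ∃ f : Fin k → SimpleGraph V, H.IsForestCoverOn S f := by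
  induction S using Finset.strongInduction with
  | H S ih =>
    rcases S.eq_empty_or_nonempty with rfl | hS
    · exact ⟨fun _ => ⊥, fun _ => isAcyclic_bot, fun _ => bot_le, fun _ => by simp [support],
        by simp⟩
    obtain ⟨x, hxS, hx⟩ := h S hS
    obtain ⟨f, hf⟩ := ih (S.erase x) (erase_ssubset hxS)
    rw [← insert_erase hxS, coe_insert]
    exact hf.insert (notMem_erase x S)
      ((card_le_card (filter_subset_filter _ (erase_subset x S))).trans hx)

lemma IsDegenerate.exists_forest_cover [Fintype V] {H : SimpleGraph V} {k : ℕ}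
    (h : H.IsDegenerate k) : ∃ f : Fin k → SimpleGraph V,
      (∀ i, (f i).IsAcyclic ∧ f i ≤ H) ∧ ∀ e ∈ H.edgeSet, ∃ i, e ∈ (f i).edgeSet := by
  obtain ⟨f, hf⟩ := h.exists_isForestCoverOn univ
  refine ⟨f, fun i => ⟨hf.isAcyclic i, hf.le i⟩, fun e he => ?_⟩
  induction e using Sym2.ind with
  | _ u v => exact hf.exists_adj u (by simp) v (by simp) he

lemma IsDegenerate.arb_le [Fintype V] {H : SimpleGraph V} {k : ℕ} (h : H.IsDegenerate k) :
    arb H ≤ k :=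
  Nat.sInf_le h.exists_forest_cover

lemma IsDegenerate.exists_forest_cover_arb [Fintype V] {H : SimpleGraph V} {k : ℕ}
    (h : H.IsDegenerate k) : ∃ f : Fin (arb H) → SimpleGraph V,
      (∀ i, (f i).IsAcyclic ∧ f i ≤ H) ∧ ∀ e ∈ H.edgeSet, ∃ i, e ∈ (f i).edgeSet := by
  show arb H ∈ {n | ∃ f : Fin n → SimpleGraph V,
    (∀ i, (f i).IsAcyclic ∧ f i ≤ H) ∧ ∀ e ∈ H.edgeSet, ∃ i, e ∈ (f i).edgeSet}
  exact Nat.sInf_mem ⟨k, h.exists_forest_cover⟩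

lemma isDegenerate_of_degree_le [Fintype V] {G : SimpleGraph V} {Δ : ℕ}
    (h : ∀ v, G.degree v ≤ Δ) : G.IsDegenerate Δ := fun S ⟨x, hx⟩ =>
  ⟨x, hx, (card_le_card fun y hy => by simpa using (mem_filter.mp hy).2).trans
    ((card_neighborFinset_eq_degree G x).trans_le (h x))⟩

lemma isDegenerate_of_weight [Fintype V] {H : SimpleGraph V} (w : V → V → ℕ) {d : ℕ}
    (hw : ∀ x y, H.Adj x y → 2 ≤ w x y + w y x)
    (hd : ∀ x, ∑ y ∈ H.neighborFinset x, w x y ≤ d) : H.IsDegenerate d := by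
  intro S hS
  set W : V → V → ℕ := fun x y => if H.Adj x y then w x y else 0
  have hdeg : ∑ x ∈ S, #{y ∈ S | H.Adj x y} ≤ ∑ x ∈ S, ∑ y ∈ S, W x y := by
    suffices 2 * ∑ x ∈ S, #{y ∈ S | H.Adj x y} ≤ 2 * ∑ x ∈ S, ∑ y ∈ S, W x y by omega
    calc 2 * ∑ x ∈ S, #{y ∈ S | H.Adj x y}
        = ∑ x ∈ S, ∑ y ∈ S, if H.Adj x y then 2 else 0 := by
          simp only [card_filter, mul_sum, mul_ite, mul_one, mul_zero]
      _ ≤ ∑ x ∈ S, ∑ y ∈ S, (W x y + W y x) := by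
          gcongr with x _ y _
          by_cases hxy : H.Adj x y
          · simpa [W, hxy, H.adj_comm y x] using hw x y hxy
          · simp [hxy]
      _ = 2 * ∑ x ∈ S, ∑ y ∈ S, W x y := by
          simp only [sum_add_distrib]
          rw [sum_comm (f := fun x y => W y x)]; ring
  have hW : ∀ x, ∑ y ∈ S, W x y ≤ d := fun x => by
    refine le_trans ?_ (hd x)
    rw [← sum_filter]
    exact sum_le_sum_of_subset fun y hy => by simpa using (mem_filter.mp hy).2
  exact exists_le_of_sum_le hS (hdeg.trans (sum_le_sum fun x _ => hW x))

lemma reachable_out_connectedComponentMk (F : SimpleGraph V) (u : V) :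
    F.Reachable (F.connectedComponentMk u).out u :=
  ConnectedComponent.exact (F.connectedComponentMk u).out_eq

-- The neighbour of `u` on a shortest walk to the chosen root of its component; a root is its own
-- parent.
noncomputable def parent (F : SimpleGraph V) (u : V) : V :=
  (F.reachable_out_connectedComponentMk u).exists_walk_length_eq_dist.choose.penultimate

lemma IsAcyclic.eq_penultimate_of_adj_of_dist_lt {F : SimpleGraph V} (hF : F.IsAcyclic)
    {r u v : V} {p : F.Walk r u} (hp : p.length = F.dist r u) (h : F.Adj u v)
    (hlt : F.dist r v < F.dist r u) : v = p.penultimate := by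
  obtain ⟨q, hq, hqlen⟩ := (p.reachable.trans h.reachable).exists_path_of_dist
  have hu : u ∉ q.support := fun hu => by
    have := (dist_le (q.takeUntil u hu)).trans (q.length_takeUntil_le_length hu)
    omega
  exact hF.eq_penultimate_of_adj_end (p.isPath_of_length_eq_dist hp) h
    (hF.mem_support_of_ne_mem_support_of_adj_of_isPath (p.isPath_of_length_eq_dist hp) hq h hu)

lemma IsAcyclic.eq_parent_of_adj_of_dist_lt {F : SimpleGraph V} (hF : F.IsAcyclic) {u v : V}
    (h : F.Adj u v)
    (hlt : F.dist (F.connectedComponentMk u).out v < F.dist (F.connectedComponentMk u).out u) :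
    v = F.parent u :=
  hF.eq_penultimate_of_adj_of_dist_lt
    (F.reachable_out_connectedComponentMk u).exists_walk_length_eq_dist.choose_spec h hlt

lemma IsAcyclic.eq_parent_or_eq_parent_of_adj {F : SimpleGraph V} (hF : F.IsAcyclic) {u v : V}
    (h : F.Adj u v) : v = F.parent u ∨ u = F.parent v := by
  rcases (hF.dist_ne_of_adj h (F.reachable_out_connectedComponentMk u)).lt_or_gt with hlt | hlt
  · refine .inr (hF.eq_parent_of_adj_of_dist_lt h.symm ?_)
    rwa [ConnectedComponent.sound h.symm.reachable]
  · exact .inl (hF.eq_parent_of_adj_of_dist_lt h hlt)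

lemma exists_orientation_of_forest_cover {G : SimpleGraph V} {ι : Type*} [Fintype ι]
    {f : ι → SimpleGraph V} (hf : ∀ i, (f i).IsAcyclic)
    (hcov : ∀ e ∈ G.edgeSet, ∃ i, e ∈ (f i).edgeSet) :
    ∃ out : V → Finset V, (∀ u, #(out u) ≤ Fintype.card ι) ∧
      ∀ u v, G.Adj u v → v ∈ out u ∨ u ∈ out v := by
  refine ⟨fun u => univ.image fun i => (f i).parent u, fun u => card_image_le, fun u v h => ?_⟩
  obtain ⟨i, hi⟩ := hcov s(u, v) h
  rcases (hf i).eq_parent_or_eq_parent_of_adj hi with h' | h'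
  · exact .inl (mem_image.mpr ⟨i, mem_univ _, h'.symm⟩)
  · exact .inr (mem_image.mpr ⟨i, mem_univ _, h'.symm⟩)

def majorityWeight (ℓ k : ℕ) : ℕ := if ℓ < 2 * k then 2 else if ℓ = 2 * k then 1 else 0

lemma two_le_majorityWeight_add {ℓ k m : ℕ} (h : ℓ ≤ k + m) :
    2 ≤ majorityWeight ℓ k + majorityWeight ℓ m := by
  unfold majorityWeight; split_ifs <;> omega

lemma majorityWeight_add_majorityWeight_sub {ℓ k : ℕ} (h : k ≤ ℓ) :
    majorityWeight ℓ k + majorityWeight ℓ (ℓ - k) = 2 := by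
  unfold majorityWeight; split_ifs <;> omega

lemma sum_majorityWeight (ℓ : ℕ) :
    ∑ s : List.Vector Bool ℓ, majorityWeight ℓ (s.toList.count true) = 2 ^ ℓ := by
  set F : List.Vector Bool ℓ → ℕ := fun s => majorityWeight ℓ (s.toList.count true)
  have hinvol : Function.Involutive (List.Vector.map not : List.Vector Bool ℓ → _) := fun s => by
    ext; simp
  have hpair : ∀ s : List.Vector Bool ℓ, F s + F (s.map not) = 2 := fun s => by
    have hcount : (s.map not).toList.count true = ℓ - s.toList.count true := by
      have := List.count_true_add_count_false s.toList
      simp only [List.count, beq_true, beq_false, List.Vector.toList_length,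
        List.Vector.toList_map, List.countP_map, Function.comp_def] at this ⊢
      omega
    simp only [F, hcount]
    exact majorityWeight_add_majorityWeight_sub (List.count_le_length.trans_eq s.toList_length)
  have hsum : ∑ s : List.Vector Bool ℓ, F (s.map not) = ∑ s, F s := Equiv.sum_comp hinvol.toPerm F
  have h2 : ∑ s : List.Vector Bool ℓ, (F s + F (s.map not)) = 2 * 2 ^ ℓ := by
    simp only [hpair, sum_const, card_univ, card_vector, Fintype.card_bool, smul_eq_mul]
    ring
  rw [sum_add_distrib, hsum, ← two_mul] at h2
  exact Nat.eq_of_mul_eq_mul_left two_pos h2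

lemma pow_mul_pow_le_of_le {a Δ k m p : ℕ} (haΔ : a ≤ Δ) (hk : 0 < k) (hmk : m ≤ k)
    (hp : k + m ≤ p) : a ^ k * Δ ^ m ≤ a ^ ((p + 1) / 2) * Δ ^ (p / 2) := by
  rcases Nat.eq_zero_or_pos a with rfl | ha
  · simp [zero_pow hk.ne']
  set c := (p + 1) / 2
  calc a ^ k * Δ ^ m = a ^ min k c * (a ^ (k - c) * Δ ^ m) := by
        rw [← mul_assoc, ← pow_add, show min k c + (k - c) = k by omega]
    _ ≤ a ^ min k c * (Δ ^ (k - c) * Δ ^ m) := by gcongr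
    _ = a ^ min k c * Δ ^ (k - c + m) := by rw [pow_add]
    _ ≤ a ^ c * Δ ^ (p / 2) := by
        have : 0 < Δ := ha.trans_le haΔ
        gcongr <;> omega

section Patterns

variable {G : SimpleGraph V}

noncomputable def Walk.pattern (out : V → Finset V) {u v : V} (q : G.Walk u v) : List Bool :=
  q.darts.map fun d => decide (d.snd ∈ out d.fst)

@[simp]
lemma Walk.length_pattern (out : V → Finset V) {u v : V} (q : G.Walk u v) :
    (q.pattern out).length = q.length := by
  simp [Walk.pattern]

lemma Walk.length_le_count_pattern_add {out : V → Finset V}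
    (horient : ∀ u v, G.Adj u v → v ∈ out u ∨ u ∈ out v) {u v : V} (q : G.Walk u v) :
    q.length ≤ (q.pattern out).count true + (q.reverse.pattern out).count true := by
  simp only [Walk.pattern, List.count, beq_true, List.countP_map, Function.comp_def,
    Walk.darts_reverse, List.map_reverse, List.map_map, Dart.symm_toProd, Prod.fst_swap,
    Prod.snd_swap, List.countP_reverse]
  rw [← q.length_darts, List.length_eq_countP_add_countP fun d => decide (d.snd ∈ out d.fst)]
  gcongr 1
  refine List.countP_mono_left fun d hd hnot => ?_
  simpa using (horient _ _ d.adj).resolve_left (by simpa using hnot)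

variable [Fintype V]

noncomputable def reachByPattern (G : SimpleGraph V) (out : V → Finset V) :
    V → List Bool → Finset V
  | u, [] => {u}
  | u, b :: s => (if b then out u else G.neighborFinset u).biUnion fun v => reachByPattern G out v s

lemma Walk.mem_reachByPattern (out : V → Finset V) {u v : V} (q : G.Walk u v) :
    v ∈ reachByPattern G out u (q.pattern out) := by
  induction q with
  | nil => simp [Walk.pattern, reachByPattern]
  | cons h q ih =>
    simp only [Walk.pattern, Walk.darts_cons, List.map_cons] at ih ⊢
    simp only [reachByPattern, mem_biUnion]
    exact ⟨_, by split_ifs with hb <;> simp_all, ih⟩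

lemma card_reachByPattern_le {out : V → Finset V} {a Δ : ℕ} (hout : ∀ u, #(out u) ≤ a)
    (hdeg : ∀ u, G.degree u ≤ Δ) (u : V) (s : List Bool) :
    #(reachByPattern G out u s) ≤ a ^ s.count true * Δ ^ s.count false := by
  induction s generalizing u with
  | nil => simp [reachByPattern]
  | cons b s ih =>
    have hstep : #(if b then out u else G.neighborFinset u) ≤ if b then a else Δ := by
      split_ifs
      · exact hout u
      · exact (card_neighborFinset_eq_degree G u).trans_le (hdeg u)
    calc #(reachByPattern G out u (b :: s))
        ≤ ∑ v ∈ if b then out u else G.neighborFinset u, #(reachByPattern G out v s) :=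
          card_biUnion_le
      _ ≤ #(if b then out u else G.neighborFinset u) * (a ^ s.count true * Δ ^ s.count false) :=
          sum_le_card_nsmul _ _ _ fun v _ => ih v
      _ ≤ (if b then a else Δ) * (a ^ s.count true * Δ ^ s.count false) := by gcongr
      _ = a ^ (b :: s).count true * Δ ^ (b :: s).count false := by
          cases b <;> simp [pow_succ] <;> ring

-- A maximum over all shortest walks, so that `(x, y)` and `(y, x)` need no coherent choice of walk.
noncomputable def pairWeight (G : SimpleGraph V) (out : V → Finset V) (x y : V) : ℕ :=
  (G.finsetWalkLength (G.dist x y) x y).sup fun q =>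
    majorityWeight (G.dist x y) ((q.pattern out).count true)

lemma two_le_pairWeight_add {out : V → Finset V}
    (horient : ∀ u v, G.Adj u v → v ∈ out u ∨ u ∈ out v) {x y : V}
    (h : G.Reachable x y) : 2 ≤ pairWeight G out x y + pairWeight G out y x := by
  obtain ⟨q, hq⟩ := h.exists_walk_length_eq_dist
  have hxy : majorityWeight (G.dist x y) ((q.pattern out).count true) ≤ pairWeight G out x y :=
    le_sup (f := fun q => majorityWeight _ ((q.pattern out).count true))
      (mem_finsetWalkLength_iff.mpr hq)
  have hyx : majorityWeight (G.dist x y) ((q.reverse.pattern out).count true) ≤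
      pairWeight G out y x := by
    rw [pairWeight, dist_comm (u := y)]
    exact le_sup (f := fun q => majorityWeight _ ((q.pattern out).count true))
      (mem_finsetWalkLength_iff.mpr (by rw [Walk.length_reverse, hq]))
  have := two_le_majorityWeight_add (hq ▸ q.length_le_count_pattern_add horient)
  omega

lemma pairWeight_le_sum {out : V → Finset V} {x y : V} {ℓ : ℕ} (hxy : G.dist x y = ℓ) :
    pairWeight G out x y ≤ ∑ s : List.Vector Bool ℓ,
      if y ∈ reachByPattern G out x s.toList then majorityWeight ℓ (s.toList.count true)
      else 0 := by
  subst hxy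
  refine Finset.sup_le fun q hq => ?_
  rw [mem_finsetWalkLength_iff] at hq
  let s : List.Vector Bool (G.dist x y) := ⟨q.pattern out, by simp [hq]⟩
  refine le_trans ?_ (single_le_sum (fun _ _ => Nat.zero_le _) (mem_univ s))
  simp [s, q.mem_reachByPattern out]

lemma card_reachByPattern_le_of_majority {out : V → Finset V} {a Δ p : ℕ}
    (hout : ∀ u, #(out u) ≤ a) (hdeg : ∀ u, G.degree u ≤ Δ) (haΔ : a ≤ Δ) (x : V)
    {s : List Bool} (hs : 0 < s.length) (hsp : s.length ≤ p) (hmaj : s.length ≤ 2 * s.count true) :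
    #(reachByPattern G out x s) ≤ a ^ ((p + 1) / 2) * Δ ^ (p / 2) := by
  have := List.count_true_add_count_false s
  exact (card_reachByPattern_le hout hdeg x s).trans
    (pow_mul_pow_le_of_le haΔ (by omega) (by omega) (by omega))

lemma sum_pairWeight_le_of_dist_eq {out : V → Finset V} {a Δ p ℓ : ℕ}
    (hout : ∀ u, #(out u) ≤ a) (hdeg : ∀ u, G.degree u ≤ Δ) (haΔ : a ≤ Δ) (hℓ : 0 < ℓ)
    (hℓp : ℓ ≤ p) (x : V) (T : Finset V) (hT : ∀ y ∈ T, G.dist x y = ℓ) :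
    ∑ y ∈ T, pairWeight G out x y ≤ 2 ^ ℓ * (a ^ ((p + 1) / 2) * Δ ^ (p / 2)) := by
  set A := a ^ ((p + 1) / 2) * Δ ^ (p / 2)
  set R : List.Vector Bool ℓ → Finset V := fun s => reachByPattern G out x s.toList
  set m : List.Vector Bool ℓ → ℕ := fun s => majorityWeight ℓ (s.toList.count true)
  calc ∑ y ∈ T, pairWeight G out x y
      ≤ ∑ y ∈ T, ∑ s, if y ∈ R s then m s else 0 :=
        sum_le_sum fun y hy => pairWeight_le_sum (hT y hy)
    _ = ∑ s, #(T ∩ R s) * m s := by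
        rw [sum_comm]
        simp only [sum_ite_mem, sum_const, smul_eq_mul]
    _ ≤ ∑ s, m s * A := by
        refine sum_le_sum fun s _ => ?_
        by_cases hmaj : ℓ ≤ 2 * s.toList.count true
        · rw [mul_comm]
          gcongr
          refine (card_le_card inter_subset_right).trans ?_
          exact card_reachByPattern_le_of_majority hout hdeg haΔ x (by simpa using hℓ)
            (by simpa using hℓp) (by simpa using hmaj)
        · have hm : m s = 0 := by simp only [m, majorityWeight]; split_ifs <;> omega
          simp [hm]
    _ = 2 ^ ℓ * A := by rw [← sum_mul, sum_majorityWeight]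

lemma sum_pairWeight_graphPow_le {out : V → Finset V} {a Δ p : ℕ}
    (hout : ∀ u, #(out u) ≤ a) (hdeg : ∀ u, G.degree u ≤ Δ) (haΔ : a ≤ Δ) (x : V) :
    ∑ y ∈ (graphPow G p).neighborFinset x, pairWeight G out x y ≤
      2 ^ (p + 1) * (a ^ ((p + 1) / 2) * Δ ^ (p / 2)) := by
  have hdist : ∀ y ∈ (graphPow G p).neighborFinset x, G.dist x y ∈ Icc 1 p := fun y hy => by
    obtain ⟨hne, hr, hle⟩ := (mem_neighborFinset _ x y).mp hy
    exact mem_Icc.mpr ⟨hr.pos_dist_of_ne hne, hle⟩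
  rw [← sum_fiberwise_of_maps_to hdist]
  calc ∑ ℓ ∈ Icc 1 p, ∑ y ∈ (graphPow G p).neighborFinset x with G.dist x y = ℓ,
        pairWeight G out x y
      ≤ ∑ ℓ ∈ Icc 1 p, 2 ^ ℓ * (a ^ ((p + 1) / 2) * Δ ^ (p / 2)) := by
        refine sum_le_sum fun ℓ hℓ => ?_
        obtain ⟨hℓ1, hℓp⟩ := mem_Icc.mp hℓ
        exact sum_pairWeight_le_of_dist_eq hout hdeg haΔ hℓ1 hℓp x _
          fun y hy => (mem_filter.mp hy).2
    _ ≤ 2 ^ (p + 1) * (a ^ ((p + 1) / 2) * Δ ^ (p / 2)) := by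
        rw [← sum_mul]
        gcongr
        exact (Nat.geomSum_lt le_rfl fun k hk => by simp at hk; omega).le

end Patterns

end SimpleGraph

open SimpleGraph

theorem stmt12_general {V : Type*} [Fintype V] (G : SimpleGraph V) (p Δ : ℕ)
    (hdeg : ∀ v : V, (G.neighborSet v).ncard ≤ Δ) :
    arb (graphPow G p) ≤ 2 ^ (p + 1) * arb G ^ ((p + 1) / 2) * Δ ^ (p / 2) := by
  have hdeg' : ∀ v, G.degree v ≤ Δ := fun v => by
    simpa [Set.ncard_eq_toFinset_card', ← neighborFinset_def] using hdeg v
  have hG : G.IsDegenerate Δ := isDegenerate_of_degree_le hdeg'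
  obtain ⟨f, hf, hcov⟩ := hG.exists_forest_cover_arb
  obtain ⟨out, hout, horient⟩ := exists_orientation_of_forest_cover (fun i => (hf i).1) hcov
  rw [Fintype.card_fin] at hout
  have hGp : (graphPow G p).IsDegenerate (2 ^ (p + 1) * (arb G ^ ((p + 1) / 2) * Δ ^ (p / 2))) :=
    isDegenerate_of_weight (pairWeight G out) (fun x y hxy => two_le_pairWeight_add horient hxy.2.1)
      (sum_pairWeight_graphPow_le hout hdeg' hG.arb_le)
  exact hGp.arb_le.trans_eq (mul_assoc _ _ _).symm

/-- For all integers p ≥ 1 and Δ ≥ 1 and every finite simple graph G with maximum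
degree at most Δ, arb(G^p) ≤ 2^{p+1} · arb(G)^{⌈p/2⌉} · Δ^{⌊p/2⌋}. -/
theorem stmt12 {V : Type*} [Fintype V] (G : SimpleGraph V) (p Δ : ℕ) (hp : 1 ≤ p) (hΔ : 1 ≤ Δ)
    (hdeg : ∀ v : V, (G.neighborSet v).ncard ≤ Δ) :
    arb (graphPow G p) ≤ 2 ^ (p + 1) * arb G ^ ((p + 1) / 2) * Δ ^ (p / 2) :=
  stmt12_general G p Δ hdeg
end

section
/- Let c ≥ 2 be an integer and let G be a finite simple graph with mad(G) < 4 − 1/c and maximum degree Δ(G) ≥ 14c − 7. Then G² is 2Δ(G)-choosable: for every assignment of a list L(v) of at least 2Δ(G) colors to each vertex v, there is a proper coloring of G² choosing each vertex's color from its list. -/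
/-
Colour G² greedily: it suffices that every nonempty S ⊆ V has a vertex with fewer than 2Δ
vertices of S within distance two. If S has none, let U be the vertices outside S with at least
two neighbours in S; discharging shows that G[S ∪ U] has average degree at least a = 4 - 1/c.
Vertices of U spread their charge evenly over their neighbours in S, and a vertex of S with d ≥ 4
neighbours in S sends 1 - a/d to each of them. A vertex of S with at most three neighbours in S
sees about 2Δ vertices of S within distance two, so the numbers d(u) of neighbours in S of its
neighbours u satisfy Σ (d(u) - 1) ≥ 2Δ - 3; along each edge it receives at least μ (d(u) - 1),
where μ is the slope of a chord of the concave function x ↦ 2 - a/x.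
-/

open Finset

/-- The slope of the line through `(1, 0)` and `(D, 2 - a / D)`. -/
noncomputable def chordSlope (a D : ℝ) : ℝ := (2 * D - a) / (D * (D - 1))

section ChordSlope

variable {a D : ℝ}

theorem nine_le_of_ten_le_mul (ha : 3 ≤ a) (ha₄ : a ≤ 4)
    (hD : 10 ≤ (4 - a) * (D + 1)) : 9 ≤ D := by
  have hD1 : 0 < D + 1 := by
    by_contra! h
    nlinarith [mul_nonpos_of_nonneg_of_nonpos (sub_nonneg.2 ha₄) h]
  nlinarith [mul_le_mul_of_nonneg_right (by linarith : 4 - a ≤ 1) hD1.le]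

theorem chordSlope_nonneg (ha : 3 ≤ a) (ha₄ : a ≤ 4)
    (hD : 10 ≤ (4 - a) * (D + 1)) : 0 ≤ chordSlope a D := by
  have := nine_le_of_ten_le_mul ha ha₄ hD
  exact div_nonneg (by linarith) (by nlinarith)

theorem two_mul_chordSlope_le_one (ha : 3 ≤ a) (ha₄ : a ≤ 4)
    (hD : 10 ≤ (4 - a) * (D + 1)) : 2 * chordSlope a D ≤ 1 := by
  have := nine_le_of_ten_le_mul ha ha₄ hD
  rw [chordSlope, mul_div_assoc', div_le_one (by nlinarith)]
  nlinarith

theorem le_chordSlope_mul (ha : 3 ≤ a) (ha₄ : a ≤ 4)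
    (hD : 10 ≤ (4 - a) * (D + 1)) : a ≤ chordSlope a D * (2 * D - 3) := by
  have := nine_le_of_ten_le_mul ha ha₄ hD
  rw [chordSlope, div_mul_eq_mul_div, le_div_iff₀ (by nlinarith)]
  nlinarith

theorem chordSlope_mul_sub_one_le (ha : 3 ≤ a) (ha₄ : a ≤ 4)
    (hD : 10 ≤ (4 - a) * (D + 1)) {x : ℝ} (hx : 2 ≤ x) (hxD : x ≤ D) :
    chordSlope a D * (x - 1) ≤ 2 - a / x := by
  have hD9 := nine_le_of_ten_le_mul ha ha₄ hD
  have hμ0 := chordSlope_nonneg ha ha₄ hD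
  have hμ2 : 2 * chordSlope a D ≤ 4 - a := by
    rw [chordSlope, mul_div_assoc', div_le_iff₀ (by nlinarith)]
    nlinarith
  have hμ : chordSlope a D * (D * (D - 1)) = 2 * D - a := div_mul_cancel₀ _ (by nlinarith)
  set μ := chordSlope a D
  -- `2x - a - μx(x - 1)` is concave in `x`, nonnegative at `2` and zero at `D`
  have hfactor : (D - 2) * (2 * x - a - μ * x * (x - 1))
      = (4 - a - 2 * μ) * (D - x) + μ * (x - 2) * (D - x) * (D - 2) := by
    linear_combination (2 - x) * hμ
  have hq : 0 ≤ 2 * x - a - μ * x * (x - 1) := by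
    refine nonneg_of_mul_nonneg_right (hfactor ▸ add_nonneg ?_ ?_) (by linarith : (0:ℝ) < D - 2)
    · exact mul_nonneg (by linarith) (by linarith)
    · exact mul_nonneg (mul_nonneg (mul_nonneg hμ0 (by linarith)) (by linarith)) (by linarith)
  rw [le_sub_iff_add_le, ← le_sub_iff_add_le', div_le_iff₀ (by linarith)]
  nlinarith

end ChordSlope

namespace SimpleGraph

variable {V : Type*}

def degreeIn (G : SimpleGraph V) [DecidableRel G.Adj] (S : Finset V) (v : V) : ℕ :=
  #{y ∈ S | G.Adj v y}

theorem degreeIn_le_maxDegree [Fintype V] (G : SimpleGraph V) [DecidableRel G.Adj]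
    (S : Finset V) (v : V) : G.degreeIn S v ≤ G.maxDegree := by
  calc G.degreeIn S v ≤ #(G.neighborFinset v) := by
        rw [neighborFinset_eq_filter]; exact card_le_card (filter_subset_filter _ (subset_univ S))
    _ ≤ G.maxDegree := (card_neighborFinset_eq_degree G v).trans_le (G.degree_le_maxDegree v)

theorem sum_degreeIn_comm (G : SimpleGraph V) [DecidableRel G.Adj] (A B : Finset V) :
    ∑ x ∈ A, G.degreeIn B x = ∑ x ∈ B, G.degreeIn A x := by
  simpa [degreeIn, bipartiteAbove, bipartiteBelow, G.adj_comm] using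
    sum_card_bipartiteAbove_eq_sum_card_bipartiteBelow G.Adj (s := A) (t := B)

theorem sum_sum_neighborFinset_eq_sum_degreeIn_smul {M : Type*} [AddCommMonoid M] [Fintype V]
    (G : SimpleGraph V) [DecidableRel G.Adj] (S : Finset V) (f : V → M) :
    ∑ v ∈ S, ∑ u ∈ G.neighborFinset v, f u = ∑ u, G.degreeIn S u • f u := by
  simp_rw [neighborFinset_eq_filter]
  simpa [bipartiteAbove, bipartiteBelow, degreeIn, G.adj_comm] using
    sum_sum_bipartiteAbove_eq_sum_sum_bipartiteBelow G.Adj (s := S) (t := univ) (fun _ u => f u)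

theorem sum_degreeIn_add_two_mul_sum_degreeIn_le [DecidableEq V] (G : SimpleGraph V)
    [DecidableRel G.Adj] {S U : Finset V} (hSU : Disjoint S U) :
    ∑ x ∈ S, G.degreeIn S x + 2 * ∑ x ∈ U, G.degreeIn S x ≤
      ∑ x ∈ S ∪ U, G.degreeIn (S ∪ U) x := by
  have hsplit : ∀ x, G.degreeIn (S ∪ U) x = G.degreeIn S x + G.degreeIn U x := fun x => by
    rw [degreeIn, filter_union, card_union_of_disjoint (disjoint_filter_filter hSU)]; rfl
  rw [sum_union hSU]
  simp only [hsplit, sum_add_distrib, G.sum_degreeIn_comm S U]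
  omega

theorem sum_degreeIn_le_mad_mul_card [Fintype V] (G : SimpleGraph V) [DecidableRel G.Adj]
    {T : Finset V} (hT : T.Nonempty) : ∑ x ∈ T, (G.degreeIn T x : ℝ) ≤ mad G * #T := by
  classical
  set H := (⊤ : G.Subgraph).induce (T : Set V)
  have hsum : ∑ x ∈ T, G.degreeIn T x = 2 * H.edgeSet.ncard := by
    rw [← H.edgeSet_spanningCoe, Set.ncard_eq_toFinset_card', ← edgeFinset,
      ← sum_degrees_eq_twice_card_edges, ← sum_subset (subset_univ T)]
    · refine sum_congr rfl fun x hx => ?_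
      rw [← card_neighborFinset_eq_degree, degreeIn]
      congr 1; ext y; simp [H, hx]
    · intro x _ hx
      rw [← card_neighborFinset_eq_degree, card_eq_zero]
      ext y; simp [H, hx]
  have hbdd : BddAbove {x : ℝ | ∃ H : G.Subgraph, H.verts.Nonempty ∧
      x = 2 * H.edgeSet.ncard / H.verts.ncard} :=
    ((Set.finite_range fun H : G.Subgraph => (2 * H.edgeSet.ncard / H.verts.ncard : ℝ)).subset
      (by rintro x ⟨H, -, rfl⟩; exact ⟨H, rfl⟩)).bddAbove
  have hle : 2 * (H.edgeSet.ncard : ℝ) / #T ≤ mad G :=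
    le_csSup hbdd ⟨H, by simpa [H] using hT, by simp [H]⟩
  rw [div_le_iff₀ (by exact_mod_cast hT.card_pos)] at hle
  exact hle.trans_eq' (by exact_mod_cast hsum.symm)

theorem adj_or_exists_adj_adj_of_graphPow_two_adj {G : SimpleGraph V} {u v : V}
    (h : (graphPow G 2).Adj u v) : G.Adj u v ∨ ∃ w, G.Adj u w ∧ G.Adj w v := by
  obtain ⟨huv, hr, hd⟩ := h
  obtain ⟨p, hp⟩ := hr.exists_walk_length_eq_dist
  match p, hp ▸ hd with
  | .nil, _ => exact absurd rfl huv
  | .cons h .nil, _ => exact .inl h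
  | .cons h (.cons h' .nil), _ => exact .inr ⟨_, h, h'⟩

theorem degreeIn_graphPow_two_add_degree_le [Fintype V] [DecidableEq V] (G : SimpleGraph V)
    [DecidableRel G.Adj] [DecidableRel (graphPow G 2).Adj] {S : Finset V} {v : V} (hv : v ∈ S) :
    (graphPow G 2).degreeIn S v + G.degree v ≤
      G.degreeIn S v + ∑ u ∈ G.neighborFinset v, G.degreeIn S u := by
  have hsub : {y ∈ S | (graphPow G 2).Adj v y} ⊆ {y ∈ S | G.Adj v y} ∪
      (G.neighborFinset v).biUnion fun u => {y ∈ S | G.Adj u y}.erase v := by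
    intro y hy
    obtain ⟨hyS, hvy⟩ := mem_filter.1 hy
    rcases adj_or_exists_adj_adj_of_graphPow_two_adj hvy with h | ⟨w, hvw, hwy⟩
    · exact mem_union_left _ (mem_filter.2 ⟨hyS, h⟩)
    · refine mem_union_right _ (mem_biUnion.2 ⟨w, (G.mem_neighborFinset v w).2 hvw, ?_⟩)
      exact mem_erase.2 ⟨hvy.1.symm, mem_filter.2 ⟨hyS, hwy⟩⟩
  have herase : ∀ u ∈ G.neighborFinset v,
      #({y ∈ S | G.Adj u y}.erase v) + 1 = G.degreeIn S u := fun u hu =>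
    card_erase_add_one (mem_filter.2 ⟨hv, ((G.mem_neighborFinset v u).1 hu).symm⟩)
  calc (graphPow G 2).degreeIn S v + G.degree v
      ≤ G.degreeIn S v + ∑ u ∈ G.neighborFinset v, #({y ∈ S | G.Adj u y}.erase v)
          + #(G.neighborFinset v) := by
        rw [card_neighborFinset_eq_degree]
        gcongr
        exact (card_le_card hsub).trans
          ((card_union_le _ _).trans (Nat.add_le_add_left card_biUnion_le _))
    _ = G.degreeIn S v + ∑ u ∈ G.neighborFinset v, G.degreeIn S u := by
        rw [card_eq_sum_ones (G.neighborFinset v), add_assoc, ← sum_add_distrib,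
          sum_congr rfl herase]

theorem exists_listColoring_of_forall_exists_degreeIn_lt {α : Type*} [Fintype V]
    [DecidableEq V] [DecidableEq α] (H : SimpleGraph V) [DecidableRel H.Adj] {k : ℕ}
    (L : V → Finset α) (hL : ∀ v, k ≤ #(L v))
    (hdeg : ∀ S : Finset V, S.Nonempty → ∃ v ∈ S, H.degreeIn S v < k) :
    ∃ f : V → α, (∀ v, f v ∈ L v) ∧ ∀ u v, H.Adj u v → f u ≠ f v := by
  rcases isEmpty_or_nonempty V with hV | hV
  · exact ⟨isEmptyElim, isEmptyElim, isEmptyElim⟩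
  obtain ⟨v₀, -, hv₀⟩ := hdeg univ univ_nonempty
  obtain ⟨c₀, -⟩ := card_pos.1 ((Nat.zero_le _).trans_lt (hv₀.trans_le (hL v₀)))
  suffices ∀ S : Finset V, ∃ f : V → α,
      (∀ v ∈ S, f v ∈ L v) ∧ ∀ u ∈ S, ∀ v ∈ S, H.Adj u v → f u ≠ f v by
    obtain ⟨f, hfL, hf⟩ := this univ
    exact ⟨f, fun v => hfL v (mem_univ v), fun u v => hf u (mem_univ u) v (mem_univ v)⟩
  intro S
  induction S using Finset.strongInduction with | H S ih =>
  rcases S.eq_empty_or_nonempty with rfl | hS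
  · exact ⟨fun _ => c₀, by simp, by simp⟩
  obtain ⟨v, hv, hlt⟩ := hdeg S hS
  obtain ⟨f, hfL, hf⟩ := ih (S.erase v) (erase_ssubset hv)
  obtain ⟨c, hcL, hc⟩ := exists_mem_notMem_of_card_lt_card
    (card_image_le.trans_lt (hlt.trans_le (hL v)) : #({y ∈ S | H.Adj v y}.image f) < _)
  have hcx : ∀ x ∈ S, H.Adj v x → f x ≠ c := fun x hx hvx hfx =>
    hc (mem_image.2 ⟨x, mem_filter.2 ⟨hx, hvx⟩, hfx⟩)
  refine ⟨Function.update f v c, fun u hu => ?_, fun u hu w hw huw => ?_⟩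
  · rcases eq_or_ne u v with rfl | huv
    · simpa using hcL
    · simpa [huv] using hfL u (mem_erase.2 ⟨huv, hu⟩)
  · simp only [Function.update_apply]
    split_ifs with hu' hw' hw'
    · exact (huw.ne (hu'.trans hw'.symm)).elim
    · exact (hcx w hw (hu' ▸ huw)).symm
    · exact hcx u hu (hw' ▸ huw.symm)
    · exact hf u (mem_erase.2 ⟨hu', hu⟩) w (mem_erase.2 ⟨hw', hw⟩) huw

end SimpleGraph

namespace Discharging

open SimpleGraph

variable {V : Type*} [DecidableEq V] (G : SimpleGraph V) [DecidableRel G.Adj] (S : Finset V)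
  {a : ℝ}

def outer [Fintype V] : Finset V := {u ∈ Sᶜ | 2 ≤ G.degreeIn S u}

noncomputable def share (a : ℝ) (d : ℕ) : ℝ := if 4 ≤ d then 1 - a / d else 0

/-- What a vertex of `S` receives along its edge to `u`: `1` for the edge itself, plus the charge
`u` sends along it (`(d - a) / d` when `u ∉ S` has `d ≥ 2` neighbours in `S`). -/
noncomputable def gain (a : ℝ) (u : V) : ℝ :=
  if u ∈ S then 1 + share a (G.degreeIn S u)
  else if 2 ≤ G.degreeIn S u then 2 - a / G.degreeIn S u else 0

theorem share_nonneg (ha₄ : a ≤ 4) (d : ℕ) : 0 ≤ share a d := by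
  unfold share
  split_ifs with hd
  · have : (4 : ℝ) ≤ d := by exact_mod_cast hd
    rw [sub_nonneg, div_le_one (by linarith)]
    linarith
  · rfl

theorem ite_mem_le_gain (ha₄ : a ≤ 4) (u : V) :
    (if u ∈ S then 1 else 0) ≤ gain G S a u := by
  unfold gain
  split_ifs with hu hd
  · linarith [share_nonneg ha₄ (G.degreeIn S u)]
  · have : (2 : ℝ) ≤ G.degreeIn S u := by exact_mod_cast hd
    rw [sub_nonneg, div_le_iff₀ (by linarith)]
    linarith
  · rfl

theorem chordSlope_mul_le_gain [Fintype V] (ha : 3 ≤ a) (ha₄ : a ≤ 4)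
    (hD : 10 ≤ (4 - a) * (G.maxDegree + 1)) (u : V) :
    chordSlope a G.maxDegree * (G.degreeIn S u - 1) ≤ gain G S a u := by
  have hμ := chordSlope_nonneg ha ha₄ hD
  have hdΔ : (G.degreeIn S u : ℝ) ≤ G.maxDegree := mod_cast G.degreeIn_le_maxDegree S u
  unfold gain share
  split_ifs with hu hd hd
  · rw [add_sub_assoc', one_add_one_eq_two]
    exact chordSlope_mul_sub_one_le ha ha₄ hD (by exact_mod_cast hd.trans' (by norm_num)) hdΔ
  · have : (G.degreeIn S u : ℝ) ≤ 3 := by exact_mod_cast (by omega : G.degreeIn S u ≤ 3)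
    nlinarith [two_mul_chordSlope_le_one ha ha₄ hD]
  · exact chordSlope_mul_sub_one_le ha ha₄ hD (by exact_mod_cast hd) hdΔ
  · have : (G.degreeIn S u : ℝ) ≤ 1 := by exact_mod_cast (by omega : G.degreeIn S u ≤ 1)
    nlinarith

theorem charge_le_sum_gain [Fintype V] [DecidableRel (graphPow G 2).Adj] (ha : 3 ≤ a)
    (ha₄ : a ≤ 4) (hD : 10 ≤ (4 - a) * (G.maxDegree + 1)) {v : V} (hv : v ∈ S)
    (hdense : 2 * G.maxDegree ≤ (graphPow G 2).degreeIn S v) :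
    a + G.degreeIn S v * share a (G.degreeIn S v) ≤
      ∑ u ∈ G.neighborFinset v, gain G S a u := by
  unfold share
  split_ifs with hd
  · have hd0 : (G.degreeIn S v : ℝ) ≠ 0 := by positivity
    calc a + G.degreeIn S v * (1 - a / G.degreeIn S v) = G.degreeIn S v := by
          field_simp; ring
      _ = ∑ u ∈ G.neighborFinset v, if u ∈ S then 1 else 0 := by
          rw [sum_boole, neighborFinset_eq_filter, filter_filter, degreeIn]
          congr 2; ext u; simp [and_comm]
      _ ≤ _ := sum_le_sum fun u _ => ite_mem_le_gain G S ha₄ u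
  · have hd3 : (G.degreeIn S v : ℝ) ≤ 3 := by exact_mod_cast (by omega : G.degreeIn S v ≤ 3)
    have hcount : 2 * G.maxDegree + G.degree v ≤
        G.degreeIn S v + ∑ u ∈ G.neighborFinset v, G.degreeIn S u :=
      (Nat.add_le_add_right hdense _).trans (G.degreeIn_graphPow_two_add_degree_le hv)
    have hsum : 2 * (G.maxDegree : ℝ) - G.degreeIn S v ≤
        ∑ u ∈ G.neighborFinset v, ((G.degreeIn S u : ℝ) - 1) := by
      rw [sum_sub_distrib, sum_const, card_neighborFinset_eq_degree, nsmul_one]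
      have := (Nat.cast_le (α := ℝ)).2 hcount
      push_cast at this
      linarith
    calc a + G.degreeIn S v * 0 ≤ chordSlope a G.maxDegree * (2 * G.maxDegree - 3) := by
          simpa using le_chordSlope_mul ha ha₄ hD
      _ ≤ chordSlope a G.maxDegree * ∑ u ∈ G.neighborFinset v, ((G.degreeIn S u : ℝ) - 1) :=
          mul_le_mul_of_nonneg_left (by linarith) (chordSlope_nonneg ha ha₄ hD)
      _ ≤ _ := by
          rw [mul_sum]
          exact sum_le_sum fun u _ => chordSlope_mul_le_gain G S ha ha₄ hD u

theorem sum_degreeIn_mul_gain [Fintype V] :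
    ∑ u, (G.degreeIn S u : ℝ) * gain G S a u =
      ∑ u ∈ S, (G.degreeIn S u : ℝ) * (1 + share a (G.degreeIn S u)) +
        ∑ u ∈ outer G S, (2 * (G.degreeIn S u : ℝ) - a) := by
  rw [← sum_ite_mem_eq S, ← sum_ite_mem_eq (outer G S), ← sum_add_distrib]
  refine sum_congr rfl fun u _ => ?_
  unfold gain
  by_cases hu : u ∈ S
  · simp [outer, hu]
  by_cases hd : 2 ≤ G.degreeIn S u
  · have hmem : u ∈ outer G S := by simp [outer, hu, hd]
    have : (G.degreeIn S u : ℝ) ≠ 0 := by positivity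
    rw [if_neg hu, if_pos hd, if_neg hu, if_pos hmem, zero_add]
    field_simp
  · simp [outer, hu, hd]

theorem mul_card_le_sum_degreeIn [Fintype V] [DecidableRel (graphPow G 2).Adj] (ha : 3 ≤ a)
    (ha₄ : a ≤ 4) (hD : 10 ≤ (4 - a) * (G.maxDegree + 1))
    (hdense : ∀ v ∈ S, 2 * G.maxDegree ≤ (graphPow G 2).degreeIn S v) :
    a * #(S ∪ outer G S) ≤
      ∑ x ∈ S ∪ outer G S, (G.degreeIn (S ∪ outer G S) x : ℝ) := by
  set U := outer G S
  have hSU : Disjoint S U :=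
    disjoint_left.2 fun u hu hu' => mem_compl.1 (mem_filter.1 hu').1 hu
  have hcharge := sum_le_sum fun v hv => charge_le_sum_gain G S ha ha₄ hD hv (hdense v hv)
  rw [G.sum_sum_neighborFinset_eq_sum_degreeIn_smul] at hcharge
  simp only [nsmul_eq_mul] at hcharge
  rw [sum_degreeIn_mul_gain] at hcharge
  have hedges : ((∑ x ∈ S, G.degreeIn S x + 2 * ∑ x ∈ U, G.degreeIn S x : ℕ) : ℝ) ≤
      ∑ x ∈ S ∪ U, (G.degreeIn (S ∪ U) x : ℝ) := by
    exact_mod_cast G.sum_degreeIn_add_two_mul_sum_degreeIn_le hSU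
  push_cast at hedges
  rw [card_union_of_disjoint hSU]
  simp only [sum_add_distrib, mul_add, sum_sub_distrib, sum_const, nsmul_eq_mul, mul_one,
    ← mul_sum] at hcharge
  push_cast
  linarith

end Discharging

theorem SimpleGraph.exists_degreeIn_graphPow_two_lt_of_mad_lt {V : Type*} [Fintype V]
    [DecidableEq V] (G : SimpleGraph V) [DecidableRel G.Adj] [DecidableRel (graphPow G 2).Adj]
    {a : ℝ} (ha : 3 ≤ a) (ha₄ : a ≤ 4) (hD : 10 ≤ (4 - a) * (G.maxDegree + 1))
    (hmad : mad G < a) {S : Finset V} (hS : S.Nonempty) :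
    ∃ v ∈ S, (graphPow G 2).degreeIn S v < 2 * G.maxDegree := by
  by_contra! hdense
  have hT : (S ∪ Discharging.outer G S).Nonempty := hS.mono subset_union_left
  have := (Discharging.mul_card_le_sum_degreeIn G S ha ha₄ hD hdense).trans
    (G.sum_degreeIn_le_mad_mul_card hT)
  linarith [le_of_mul_le_mul_right this (by exact_mod_cast hT.card_pos)]

/-- Let c ≥ 2 and let G be a finite simple graph with mad(G) < 4 − 1/c and
Δ(G) ≥ 14c − 7. Then G² is 2Δ(G)-choosable. -/
theorem stmt15 {V : Type*} [Fintype V] (G : SimpleGraph V) [DecidableRel G.Adj] (c : ℕ)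
    (hc : 2 ≤ c) (hmad : mad G < 4 - 1 / (c : ℝ)) (hΔ : 14 * c - 7 ≤ G.maxDegree) :
    ∀ L : V → Finset ℕ, (∀ v, 2 * G.maxDegree ≤ (L v).card) →
      ∃ f : V → ℕ, (∀ v, f v ∈ L v) ∧
        ∀ u v : V, (graphPow G 2).Adj u v → f u ≠ f v := by
  classical
  intro L hL
  have hc0 : (0 : ℝ) < c := by positivity
  have hc1 : 1 / (c : ℝ) ≤ 1 := by rw [div_le_one hc0]; exact_mod_cast (by omega : 1 ≤ c)
  have hcΔ : 10 * (c : ℝ) ≤ G.maxDegree + 1 := mod_cast (by omega : 10 * c ≤ G.maxDegree + 1)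
  refine (graphPow G 2).exists_listColoring_of_forall_exists_degreeIn_lt L hL fun S hS =>
    G.exists_degreeIn_graphPow_two_lt_of_mad_lt (by linarith) (by linarith [one_div_pos.2 hc0])
      ?_ hmad hS
  rw [sub_sub_cancel, one_div, inv_mul_eq_div, le_div_iff₀ hc0]
  linarith
end
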